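/- arXiv:1201.3033 — 10 statements merged into one kernel-verified Lean document; each statement's English description precedes it below -/
import Mathlib

section
/- In a regular skew lattice, if x' ⪯ x and x' ⪯ x'', then x ∨ y ∨ x' ∨ z ∨ x'' = x ∨ y ∨ z ∨ x'' for all y, z. -/
/-- A skew lattice: two associative idempotent operations satisfying absorption. -/
structure SkewLattice (α : Type*) where
  join : α → α → α
  meet : α → α → α
  join_assoc : ∀ x y z, join (join x y) z = join x (join y z)
  meet_assoc : ∀ x y z, meet (meet x y) z = meet x (meet y z)
  join_idem : ∀ x, join x x = x
  meet_idem : ∀ x, meet x x = x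
  absorb₁ : ∀ x y, meet x (join x y) = x
  absorb₂ : ∀ x y, meet (join y x) x = x
  absorb₃ : ∀ x y, join x (meet x y) = x
  absorb₄ : ∀ x y, join (meet y x) x = x

/-- Natural partial order: x ≥ y iff x ∨ y = x = y ∨ x. -/
def SkewLattice.geq {α : Type*} (S : SkewLattice α) (x y : α) : Prop :=
  S.join x y = x ∧ S.join y x = x

/-- Strict natural partial order. -/
def SkewLattice.gt {α : Type*} (S : SkewLattice α) (x y : α) : Prop :=
  S.geq x y ∧ x ≠ y

/-- Natural preorder: x ⪰ y iff x ∨ y ∨ x = x. -/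
def SkewLattice.succeq {α : Type*} (S : SkewLattice α) (x y : α) : Prop :=
  S.join x (S.join y x) = x

/-- Green's relation D: x D y iff x ∧ y ∧ x = x and y ∧ x ∧ y = y. -/
def SkewLattice.dd {α : Type*} (S : SkewLattice α) (x y : α) : Prop :=
  S.meet x (S.meet y x) = x ∧ S.meet y (S.meet x y) = y

/-- Parallelism of strictly ordered pairs: a > b ∥ a' > b'. -/
def SkewLattice.parallel {α : Type*} (S : SkewLattice α) (a b a' b' : α) : Prop :=
  S.gt a b ∧ S.gt a' b' ∧ S.dd a a' ∧ S.dd b b' ∧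
    a' = S.join b' (S.join a b') ∧ b' = S.meet a' (S.meet b a')

/-- If e ∧ f ∧ e = e then f ∨ e ∨ f = f, in a regular skew lattice. -/
theorem skew_pre_aux {α : Type*} (S : SkewLattice α)
    (hreg : ∀ x y z, S.join x (S.join y (S.join x (S.join z x))) =
      S.join x (S.join y (S.join z x)))
    (e f : α) (h : S.meet e (S.meet f e) = e) :
    S.join f (S.join e f) = f := by
  have heh : S.join e (S.meet f e) = S.meet f e := by
    have h4 := S.absorb₄ (S.meet f e) e
    rw [h] at h4; exact h4
  have key : S.join f (S.join e (S.join (S.meet f e) f)) = f := by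
    rw [← S.join_assoc e, heh, ← S.join_assoc f, S.absorb₃, S.join_idem]
  calc S.join f (S.join e f)
      = S.join f (S.join e (S.join f (S.join e (S.join (S.meet f e) f)))) := by
        rw [key]
    _ = S.join f (S.join e (S.join f (S.join (S.join e (S.meet f e)) f))) := by
        rw [S.join_assoc e (S.meet f e) f]
    _ = S.join f (S.join e (S.join (S.join e (S.meet f e)) f)) := hreg f e _
    _ = S.join f (S.join e (S.join e (S.join (S.meet f e) f))) := by
        rw [S.join_assoc e (S.meet f e) f]
    _ = S.join f (S.join (S.join e e) (S.join (S.meet f e) f)) := by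
        rw [S.join_assoc e e]
    _ = S.join f (S.join e (S.join (S.meet f e) f)) := by rw [S.join_idem]
    _ = f := key

theorem skew_regular_consequence {α : Type*} (S : SkewLattice α)
    (hreg : ∀ x y z, S.join x (S.join y (S.join x (S.join z x))) =
      S.join x (S.join y (S.join z x)))
    (x x' x'' y z : α)
    (h1 : S.meet x' (S.meet x x') = x')
    (h2 : S.meet x' (S.meet x'' x') = x') :
    S.join x (S.join y (S.join x' (S.join z x''))) =
      S.join x (S.join y (S.join z x'')) := by
  have A : S.join x (S.join x' x) = x := skew_pre_aux S hreg x' x h1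
  have B : S.join x'' (S.join x' x'') = x'' := skew_pre_aux S hreg x' x'' h2
  have mid := hreg x' (S.join x y) (S.join z x'')
  calc S.join x (S.join y (S.join x' (S.join z x'')))
      = S.join x (S.join y (S.join x' (S.join z (S.join x'' (S.join x' x''))))) := by
        rw [B]
    _ = S.join (S.join x (S.join x' x))
          (S.join y (S.join x' (S.join z (S.join x'' (S.join x' x''))))) := by
        rw [A]
    _ = S.join x (S.join (S.join x' (S.join (S.join x y)
          (S.join x' (S.join (S.join z x'') x')))) x'') := by
        simp only [S.join_assoc]
    _ = S.join x (S.join (S.join x' (S.join (S.join x y)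
          (S.join (S.join z x'') x'))) x'') := by
        rw [mid]
    _ = S.join (S.join x (S.join x' x))
          (S.join y (S.join z (S.join x'' (S.join x' x'')))) := by
        simp only [S.join_assoc]
    _ = S.join x (S.join y (S.join z (S.join x'' (S.join x' x'')))) := by
        rw [A]
    _ = S.join x (S.join y (S.join z x'')) := by rw [B]
end

section
/- In a skew lattice, the relation D defined by x D y iff x ∧ y ∧ x = x and y ∧ x ∧ y = y is an equivalence relation, and x D y holds iff x ∨ y ∨ x = x and y ∨ x ∨ y = y. -/
namespace SkewLattice
variable {α : Type*} (S : SkewLattice α)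

theorem sandwich (u b v : α) :
    S.meet (S.meet u (S.meet b v)) (S.meet b (S.meet u (S.meet b v)))
      = S.meet u (S.meet b v) := by
  have step1 : S.meet (S.meet u (S.meet b v)) (S.meet b v) = S.meet u (S.meet b v) := by
    rw [S.meet_assoc u (S.meet b v) (S.meet b v), S.meet_idem (S.meet b v)]
  set w := S.meet u (S.meet b v) with hw
  have step3 : S.meet (S.meet (S.meet w b) w) b = S.meet w b := by
    rw [S.meet_assoc (S.meet w b) w b, S.meet_idem (S.meet w b)]
  have step4 : S.meet (S.meet (S.meet w b) w) (S.meet b v) = S.meet (S.meet w b) w := by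
    rw [S.meet_assoc (S.meet w b) w (S.meet b v), step1]
  have step5 : S.meet (S.meet w b) w = w := by
    calc S.meet (S.meet w b) w
        = S.meet (S.meet (S.meet w b) w) (S.meet b v) := step4.symm
      _ = S.meet (S.meet (S.meet (S.meet w b) w) b) v :=
          (S.meet_assoc (S.meet (S.meet w b) w) b v).symm
      _ = S.meet (S.meet w b) v := by rw [step3]
      _ = S.meet w (S.meet b v) := S.meet_assoc w b v
      _ = w := step1
  rw [← S.meet_assoc w b w, step5]

theorem pre_trans {a b c : α} (h1 : S.meet a (S.meet b a) = a)
    (h2 : S.meet b (S.meet c b) = b) : S.meet a (S.meet c a) = a := by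
  have key : S.meet (S.meet a b) (S.meet c (S.meet b a)) = a := by
    calc S.meet (S.meet a b) (S.meet c (S.meet b a))
        = S.meet a (S.meet b (S.meet c (S.meet b a))) := S.meet_assoc a b _
      _ = S.meet a (S.meet (S.meet b (S.meet c b)) a) := by
          rw [S.meet_assoc b (S.meet c b) a, S.meet_assoc c b a]
      _ = S.meet a (S.meet b a) := by rw [h2]
      _ = a := h1
  have s := S.sandwich (S.meet a b) c (S.meet b a)
  rw [key] at s
  exact s

theorem meet_to_join {x y : α} (h : S.meet x (S.meet y x) = x) :
    S.join y (S.join x y) = y := by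
  have hx : S.meet (S.meet x y) x = x := by rw [S.meet_assoc]; exact h
  have d : S.join (S.meet x y) x = S.meet x y := by
    have a3 := S.absorb₃ (S.meet x y) x
    rw [hx] at a3
    exact a3
  have key : S.join (S.meet x y) (S.join x y) = y := by
    rw [← S.join_assoc, d, S.absorb₄]
  calc S.join y (S.join x y)
      = S.join (S.join (S.meet x y) (S.join x y)) (S.join x y) := by rw [key]
    _ = S.join (S.meet x y) (S.join (S.join x y) (S.join x y)) := S.join_assoc _ _ _
    _ = S.join (S.meet x y) (S.join x y) := by rw [S.join_idem (S.join x y)]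
    _ = y := key

theorem join_to_meet {x y : α} (h : S.join y (S.join x y) = y) :
    S.meet x (S.meet y x) = x := by
  have hy : S.join (S.join y x) y = y := by rw [S.join_assoc]; exact h
  have d : S.meet (S.join y x) y = S.join y x := by
    have a1 := S.absorb₁ (S.join y x) y
    rw [hy] at a1
    exact a1
  have key : S.meet (S.join y x) (S.meet y x) = x := by
    rw [← S.meet_assoc, d, S.absorb₂]
  calc S.meet x (S.meet y x)
      = S.meet (S.meet (S.join y x) (S.meet y x)) (S.meet y x) := by rw [key]
    _ = S.meet (S.join y x) (S.meet (S.meet y x) (S.meet y x)) := S.meet_assoc _ _ _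
    _ = S.meet (S.join y x) (S.meet y x) := by rw [S.meet_idem (S.meet y x)]
    _ = x := key

end SkewLattice

theorem skew_dd_equivalence {α : Type*} (S : SkewLattice α) :
    Equivalence S.dd ∧
    (∀ x y, S.dd x y ↔ (S.join x (S.join y x) = x ∧ S.join y (S.join x y) = y)) := by
  constructor
  · exact ⟨fun x => ⟨by rw [S.meet_idem, S.meet_idem], by rw [S.meet_idem, S.meet_idem]⟩,
      fun h => ⟨h.2, h.1⟩,
      fun hxy hyz => ⟨S.pre_trans hxy.1 hyz.1, S.pre_trans hyz.2 hxy.2⟩⟩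
  · intro x y
    constructor
    · rintro ⟨h1, h2⟩
      exact ⟨S.meet_to_join h2, S.meet_to_join h1⟩
    · rintro ⟨h1, h2⟩
      exact ⟨S.join_to_meet h2, S.join_to_meet h1⟩
end

section
/- In a skew lattice, Green's relation D (defined by x D y iff x ∧ y ∧ x = x and y ∧ x ∧ y = y) is a congruence with respect to both ∧ and ∨: if x D x' and y D y', then (x ∧ y) D (x' ∧ y') and (x ∨ y) D (x' ∨ y'). -/
section BandLemmas

variable {α : Type*}

private lemma dup2t (m : α → α → α)
    (assoc : ∀ a b c, m (m a b) c = m a (m b c)) (idem : ∀ a, m a a = a) (a b t : α) : m a (m b (m a (m b t))) = m a (m b t) := by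
  have h : m (m (m a b) (m a b)) t = m (m a b) t := by rw [idem]
  simp only [assoc] at h
  exact h

private lemma dup3t (m : α → α → α)
    (assoc : ∀ a b c, m (m a b) c = m a (m b c)) (idem : ∀ a, m a a = a) (a b c t : α) :
    m a (m b (m c (m a (m b (m c t))))) = m a (m b (m c t)) := by
  have h : m (m (m (m a b) c) (m (m a b) c)) t = m (m (m a b) c) t := by rw [idem]
  simp only [assoc] at h
  exact h

private lemma dup3 (m : α → α → α)
    (assoc : ∀ a b c, m (m a b) c = m a (m b c)) (idem : ∀ a, m a a = a) (a b c : α) : m a (m b (m c (m a (m b c)))) = m a (m b c) := by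
  have h : m (m (m a b) c) (m (m a b) c) = m (m a b) c := idem _
  simp only [assoc] at h
  exact h

private lemma dup4t (m : α → α → α)
    (assoc : ∀ a b c, m (m a b) c = m a (m b c)) (idem : ∀ a, m a a = a) (a b c d t : α) :
    m a (m b (m c (m d (m a (m b (m c (m d t))))))) = m a (m b (m c (m d t))) := by
  have h : m (m (m (m (m a b) c) d) (m (m (m a b) c) d)) t = m (m (m (m a b) c) d) t := by
    rw [idem]
  simp only [assoc] at h
  exact h

/-- In any band, if p D q and r D s (one half each), then (pr) D (qs) (one half). -/
private lemma band_dd (m : α → α → α)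
    (assoc : ∀ a b c, m (m a b) c = m a (m b c)) (idem : ∀ a, m a a = a) (p q r s : α)
    (h1 : m p (m q p) = p) (h3 : m r (m s r) = r) :
    m (m p r) (m (m q s) (m p r)) = m p r := by
  have h1t : ∀ t, m p (m q (m p t)) = m p t := by
    intro t
    have h : m (m p (m q p)) t = m p t := by rw [h1]
    simp only [assoc] at h
    exact h
  have h3t : ∀ t, m r (m s (m r t)) = m r t := by
    intro t
    have h : m (m r (m s r)) t = m r t := by rw [h3]
    simp only [assoc] at h
    exact h
  have key : m p (m r (m q (m s (m p r)))) = m p r := by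
    calc (m p (m r (m q (m s (m p r)))))
        _ = (m p (m q (m p (m r (m q (m s (m p r))))))) := (show (m p (m q (m p (m r (m q (m s (m p r))))))) = (m p (m r (m q (m s (m p r))))) by rw [h1t (m r (m q (m s (m p r))))]).symm
        _ = (m p (m q (m p (m r (m q (m s (m p (m q (m p r))))))))) := (show (m p (m q (m p (m r (m q (m s (m p (m q (m p r))))))))) = (m p (m q (m p (m r (m q (m s (m p r))))))) by rw [h1t r]).symm
        _ = (m p (m q (m p (m r (m s (m r (m q (m s (m p (m q (m p r))))))))))) := (show (m p (m q (m p (m r (m s (m r (m q (m s (m p (m q (m p r))))))))))) = (m p (m q (m p (m r (m q (m s (m p (m q (m p r))))))))) by rw [h3t (m q (m s (m p (m q (m p r)))))]).symm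
        _ = (m p (m q (m p (m r (m s (m p (m r (m s (m r (m q (m s (m p (m q (m p r)))))))))))))) := (show (m p (m q (m p (m r (m s (m p (m r (m s (m r (m q (m s (m p (m q (m p r)))))))))))))) = (m p (m q (m p (m r (m s (m r (m q (m s (m p (m q (m p r))))))))))) by rw [dup3t m assoc idem p r s (m r (m q (m s (m p (m q (m p r))))))]).symm
        _ = (m p (m q (m p (m r (m s (m p (m r (m q (m s (m p (m q (m p r)))))))))))) := by rw [h3t (m q (m s (m p (m q (m p r)))))]
        _ = (m p (m q (m p (m r (m s (m p (m r (m q (m s (m p (m q (m p (m r (m q (m p r))))))))))))))) := (show (m p (m q (m p (m r (m s (m p (m r (m q (m s (m p (m q (m p (m r (m q (m p r))))))))))))))) = (m p (m q (m p (m r (m s (m p (m r (m q (m s (m p (m q (m p r)))))))))))) by rw [dup3 m assoc idem q p r]).symm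
        _ = (m p (m q (m p (m r (m s (m p (m r (m q (m s (m p (m r (m q (m p r))))))))))))) := by rw [h1t (m r (m q (m p r)))]
        _ = (m p (m q (m p (m r (m s (m p (m r (m q (m p r))))))))) := by rw [dup4t m assoc idem s p r q (m p r)]
        _ = (m p (m q (m p (m r (m s (m p (m r (m s (m r (m q (m p r))))))))))) := (show (m p (m q (m p (m r (m s (m p (m r (m s (m r (m q (m p r))))))))))) = (m p (m q (m p (m r (m s (m p (m r (m q (m p r))))))))) by rw [h3t (m q (m p r))]).symm
        _ = (m p (m q (m p (m r (m s (m r (m q (m p r)))))))) := by rw [dup3t m assoc idem p r s (m r (m q (m p r)))]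
        _ = (m p (m q (m p (m r (m q (m p r)))))) := by rw [h3t (m q (m p r))]
        _ = (m p (m q (m p r))) := by rw [dup3 m assoc idem q p r]
        _ = (m p r) := by rw [h1t r]
  simp only [assoc]
  exact key

end BandLemmas

section SkewLemmas

variable {α : Type*} (S : SkewLattice α)

/-- x ∧ y ∧ x = x implies y ∨ x ∨ y = y. -/
private lemma meet_to_join (x y : α) (h : S.meet x (S.meet y x) = x) :
    S.join y (S.join x y) = y := by
  have h2 : S.join x (S.meet y x) = S.meet y x := by
    nth_rewrite 1 [← h]
    exact S.absorb₄ _ _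
  have hy0' : S.join (S.join y x) (S.meet y x) = y := by
    rw [S.join_assoc, h2]
    exact S.absorb₃ y x
  nth_rewrite 2 [← hy0']
  rw [S.join_assoc, dup2t S.join S.join_assoc S.join_idem y x (S.meet y x), h2]
  exact S.absorb₃ y x

/-- y ∨ x ∨ y = y implies x ∧ y ∧ x = x. -/
private lemma join_to_meet (x y : α) (h : S.join y (S.join x y) = y) :
    S.meet x (S.meet y x) = x := by
  have h2 : S.meet y (S.join x y) = S.join x y := by
    nth_rewrite 1 [← h]
    exact S.absorb₂ _ _
  have hy0' : S.meet (S.meet x y) (S.join x y) = x := by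
    rw [S.meet_assoc, h2]
    exact S.absorb₁ x y
  nth_rewrite 2 [← hy0']
  rw [S.meet_assoc, dup2t S.meet S.meet_assoc S.meet_idem x y (S.join x y), h2]
  exact S.absorb₁ x y

end SkewLemmas

theorem skew_dd_congruence {α : Type*} (S : SkewLattice α)
    (x x' y y' : α) (hx : S.dd x x') (hy : S.dd y y') :
    S.dd (S.meet x y) (S.meet x' y') ∧ S.dd (S.join x y) (S.join x' y') := by
  obtain ⟨hx1, hx2⟩ := hx
  obtain ⟨hy1, hy2⟩ := hy
  have jx1 : S.join x' (S.join x x') = x' := meet_to_join S x x' hx1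
  have jx2 : S.join x (S.join x' x) = x := meet_to_join S x' x hx2
  have jy1 : S.join y' (S.join y y') = y' := meet_to_join S y y' hy1
  have jy2 : S.join y (S.join y' y) = y := meet_to_join S y' y hy2
  refine ⟨⟨?_, ?_⟩, ?_, ?_⟩
  · exact band_dd S.meet S.meet_assoc S.meet_idem x x' y y' hx1 hy1
  · exact band_dd S.meet S.meet_assoc S.meet_idem x' x y' y hx2 hy2
  · exact join_to_meet S _ _
      (band_dd S.join S.join_assoc S.join_idem x' x y' y jx1 jy1)
  · exact join_to_meet S _ _
      (band_dd S.join S.join_assoc S.join_idem x x' y y' jx2 jy2)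
end

section
/- Parallelism of strictly ordered pairs in a skew lattice is symmetric: if a > b and a' > b' with a D a', b D b', a' = b' ∨ a ∨ b' and b' = a' ∧ b ∧ a', then also a = b ∨ a' ∨ b and b = a ∧ b' ∧ a. -/
theorem skew_parallel_symmetric {α : Type*} (S : SkewLattice α)
    (a b a' b' : α)
    (hab : S.gt a b) (hab' : S.gt a' b')
    (hda : S.dd a a') (hdb : S.dd b b')
    (h1 : a' = S.join b' (S.join a b'))
    (h2 : b' = S.meet a' (S.meet b a')) :
    a = S.join b (S.join a' b) ∧ b = S.meet a (S.meet b' a) := by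
  obtain ⟨⟨hab1, hab2⟩, -⟩ := hab
  -- basic facts from a ≥ b
  have f1 : S.meet a b = b := by have h := S.absorb₂ b a; rw [hab1] at h; exact h
  have f2 : S.meet b a = b := by have h := S.absorb₁ b a; rw [hab2] at h; exact h
  -- D for join on (b, b') from D for meet
  have step1 : S.join b' (S.meet b b') = S.meet b b' := by
    have h := S.absorb₄ (S.meet b b') b'; rw [hdb.2] at h; exact h
  have hc : S.join (S.join b b') (S.meet b b') = b := by
    rw [S.join_assoc, step1, S.absorb₃]
  have f4 : S.join b (S.join b' b) = b := by
    calc S.join b (S.join b' b) = S.join (S.join b b') b := (S.join_assoc b b' b).symm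
      _ = S.join (S.join b b') (S.join (S.join b b') (S.meet b b')) := by rw [hc]
      _ = S.join (S.join (S.join b b') (S.join b b')) (S.meet b b') :=
          (S.join_assoc (S.join b b') (S.join b b') (S.meet b b')).symm
      _ = S.join (S.join b b') (S.meet b b') := by rw [S.join_idem]
      _ = b := hc
  -- generalized rewriting lemmas
  have g3 : ∀ X, S.meet a (S.meet a' (S.meet a X)) = S.meet a X := by
    intro X
    rw [← S.meet_assoc a' a X, ← S.meet_assoc a (S.meet a' a) X, hda.1]
  have g4 : ∀ X, S.join b (S.join b' (S.join b X)) = S.join b X := by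
    intro X
    rw [← S.join_assoc b' b X, ← S.join_assoc b (S.join b' b) X, f4]
  have gmix : ∀ X, S.meet b (S.meet a X) = S.meet b X := by
    intro X; rw [← S.meet_assoc b a X, f2]
  have gmixj : ∀ X, S.join a (S.join b X) = S.join a X := by
    intro X; rw [← S.join_assoc a b X, hab1]
  have f5 : S.meet b (S.meet a' a) = b := by
    rw [← gmix (S.meet a' a), hda.1, f2]
  have f5' : S.join a (S.join b' b) = a := by
    rw [← gmixj (S.join b' b), f4, hab1]
  -- main computations
  have gm : S.meet a (S.meet b' a) = b := by
    rw [h2]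
    simp only [S.meet_assoc]
    rw [f5, ← f1, g3 b]
  have gj : S.join b (S.join a' b) = a := by
    rw [h1]
    simp only [S.join_assoc]
    rw [f5', ← hab2, g4 a]
  exact ⟨gj.symm, gm.symm⟩
end

section
/- Parallelism is transitive downward: in a skew lattice, if a > b is parallel to a' > b' and b > c is parallel to b' > c', then a > c is parallel to a' > c'. -/
section SkewAux

variable {α : Type*}

/-- Key rectangular-band computation: if `t` is R-related to `e` and `s` is L-related
to `e`, then `t ∧ s = e`. -/
lemma SkewLattice.y1 (S : SkewLattice α) (e t s : α)
    (h1 : S.meet e t = t) (h2 : S.meet t e = e)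
    (h3 : S.meet e s = e) (h4 : S.meet s e = s) : S.meet t s = e := by
  calc S.meet t s
      = S.meet (S.meet e t) s := by rw [h1]
    _ = S.meet e (S.meet t s) := by rw [S.meet_assoc]
    _ = S.meet (S.meet e s) (S.meet t s) := by rw [h3]
    _ = S.meet e (S.meet s (S.meet t s)) := by rw [S.meet_assoc]
    _ = S.meet e (S.meet s (S.meet t (S.meet s e))) := by rw [h4]
    _ = S.meet e (S.meet s (S.meet t (S.meet s (S.meet t e)))) := by rw [h2]
    _ = S.meet e (S.meet (S.meet (S.meet s t) (S.meet s t)) e) := by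
          simp only [S.meet_assoc]
    _ = S.meet e (S.meet (S.meet s t) e) := by rw [S.meet_idem]
    _ = S.meet e (S.meet s (S.meet t e)) := by rw [S.meet_assoc]
    _ = S.meet e (S.meet s e) := by rw [h2]
    _ = S.meet e s := by rw [h4]
    _ = e := h3

/-- If `s` is L-related to `e`, then `e ∧ x ∧ s = e ∧ x ∧ e`. -/
lemma SkewLattice.absorbL (S : SkewLattice α) (e x s : α)
    (h3 : S.meet e s = e) (h4 : S.meet s e = s) :
    S.meet (S.meet e x) s = S.meet (S.meet e x) e := by
  have hte : S.meet (S.join (S.meet e x) e) e = e := S.absorb₂ e (S.meet e x)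
  have hjet : S.join e (S.join (S.meet e x) e) = e := by
    rw [← S.join_assoc, S.absorb₃, S.join_idem]
  have het : S.meet e (S.join (S.meet e x) e) = S.join (S.meet e x) e := by
    have h := S.absorb₂ (S.join (S.meet e x) e) e
    rw [hjet] at h
    exact h
  have key : S.meet (S.join (S.meet e x) e) s = e :=
    S.y1 e (S.join (S.meet e x) e) s het hte h3 h4
  calc S.meet (S.meet e x) s
      = S.meet (S.meet (S.meet e x) (S.join (S.meet e x) e)) s := by rw [S.absorb₁]
    _ = S.meet (S.meet e x) (S.meet (S.join (S.meet e x) e) s) := by rw [S.meet_assoc]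
    _ = S.meet (S.meet e x) e := by rw [key]

/-- Regularity of the meet reduct (with a convenient trailing factor). -/
lemma SkewLattice.reg (S : SkewLattice α) (e x y : α) :
    S.meet (S.meet (S.meet e x) e) (S.meet y e) = S.meet (S.meet e x) (S.meet y e) := by
  have h3 : S.meet e (S.join e (S.meet y e)) = e := S.absorb₁ e (S.meet y e)
  have hse : S.join (S.join e (S.meet y e)) e = e := by
    rw [S.join_assoc, S.absorb₄, S.join_idem]
  have h4 : S.meet (S.join e (S.meet y e)) e = S.join e (S.meet y e) := by
    have h := S.absorb₁ (S.join e (S.meet y e)) e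
    rw [hse] at h
    exact h
  have habs : S.meet (S.join e (S.meet y e)) (S.meet y e) = S.meet y e :=
    S.absorb₂ (S.meet y e) e
  have hT := S.absorbL e x (S.join e (S.meet y e)) h3 h4
  calc S.meet (S.meet (S.meet e x) e) (S.meet y e)
      = S.meet (S.meet (S.meet e x) (S.join e (S.meet y e))) (S.meet y e) := by rw [← hT]
    _ = S.meet (S.meet e x) (S.meet (S.join e (S.meet y e)) (S.meet y e)) := by
          rw [S.meet_assoc]
    _ = S.meet (S.meet e x) (S.meet y e) := by rw [habs]

/-- Right-associated form of regularity. -/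
lemma SkewLattice.reg' (S : SkewLattice α) (e x y : α) :
    S.meet e (S.meet x (S.meet e (S.meet y e))) = S.meet e (S.meet x (S.meet y e)) := by
  have h := S.reg e x y
  simp only [S.meet_assoc] at h
  exact h

/-- Right-associated regularity with a trailing factor. -/
lemma SkewLattice.reg_t (S : SkewLattice α) (e x y z : α) :
    S.meet e (S.meet x (S.meet e (S.meet y (S.meet e z)))) =
      S.meet e (S.meet x (S.meet y (S.meet e z))) := by
  have h := congrArg (fun w => S.meet w z) (S.reg e x y)
  simp only [S.meet_assoc] at h
  exact h

/-- The dual skew lattice, swapping meet and join. -/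
def SkewLattice.dual (S : SkewLattice α) : SkewLattice α where
  join := S.meet
  meet := S.join
  join_assoc := S.meet_assoc
  meet_assoc := S.join_assoc
  join_idem := S.meet_idem
  meet_idem := S.join_idem
  absorb₁ := S.absorb₃
  absorb₂ := S.absorb₄
  absorb₃ := S.absorb₁
  absorb₄ := S.absorb₂

/-- Right-associated form of regularity for the join reduct. -/
lemma SkewLattice.jreg' (S : SkewLattice α) (e x y : α) :
    S.join e (S.join x (S.join e (S.join y e))) = S.join e (S.join x (S.join y e)) :=
  S.dual.reg' e x y

/-- Right-associated join regularity with a trailing factor. -/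
lemma SkewLattice.jreg_t (S : SkewLattice α) (e x y z : α) :
    S.join e (S.join x (S.join e (S.join y (S.join e z)))) =
      S.join e (S.join x (S.join y (S.join e z))) :=
  S.dual.reg_t e x y z

end SkewAux

theorem skew_parallel_trans {α : Type*} (S : SkewLattice α)
    (a b c a' b' c' : α)
    (h1 : S.parallel a b a' b') (h2 : S.parallel b c b' c') :
    S.parallel a c a' c' := by
  obtain ⟨⟨⟨jab, jba⟩, hne1⟩, ⟨⟨jab', jba'⟩, hne1'⟩, dda, ddb, ha', hb'⟩ := h1
  obtain ⟨⟨⟨jbc, jcb⟩, hne2⟩, ⟨⟨jbc', jcb'⟩, hne2'⟩, ddb2, ddc, hb'2, hc'⟩ := h2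
  have mbc : S.meet b c = c := by
    have h := S.absorb₂ c b; rw [jbc] at h; exact h
  have mcb : S.meet c b = c := by
    have h := S.absorb₁ c b; rw [jcb] at h; exact h
  refine ⟨⟨⟨?_, ?_⟩, ?_⟩, ⟨⟨?_, ?_⟩, ?_⟩, dda, ddc, ?_, ?_⟩
  · calc S.join a c = S.join (S.join a b) c := by rw [jab]
      _ = S.join a (S.join b c) := S.join_assoc a b c
      _ = S.join a b := by rw [jbc]
      _ = a := jab
  · calc S.join c a = S.join c (S.join b a) := by rw [jba]
      _ = S.join (S.join c b) a := (S.join_assoc c b a).symm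
      _ = S.join b a := by rw [jcb]
      _ = a := jba
  · intro hac
    apply hne1
    calc a = S.join b a := jba.symm
      _ = S.join b c := by rw [hac]
      _ = b := jbc
  · calc S.join a' c' = S.join (S.join a' b') c' := by rw [jab']
      _ = S.join a' (S.join b' c') := S.join_assoc a' b' c'
      _ = S.join a' b' := by rw [jbc']
      _ = a' := jab'
  · calc S.join c' a' = S.join c' (S.join b' a') := by rw [jba']
      _ = S.join (S.join c' b') a' := (S.join_assoc c' b' a').symm
      _ = S.join b' a' := by rw [jcb']
      _ = a' := jba'
  · intro hac
    apply hne1'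
    calc a' = S.join b' a' := jba'.symm
      _ = S.join b' c' := by rw [hac]
      _ = b' := jbc'
  · -- a' = c' ∨ a ∨ c'
    calc a' = S.join b' (S.join a b') := ha'
      _ = S.join (S.join c' (S.join b c'))
            (S.join a (S.join c' (S.join b c'))) := by rw [hb'2]
      _ = S.join c' (S.join b (S.join c' (S.join a (S.join c' (S.join b c'))))) := by
            simp only [S.join_assoc]
      _ = S.join c' (S.join b (S.join a (S.join c' (S.join b c')))) :=
            S.jreg_t c' b a (S.join b c')
      _ = S.join c' (S.join (S.join b a) (S.join c' (S.join b c'))) :=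
            congrArg (S.join c') (S.join_assoc b a _).symm
      _ = S.join c' (S.join a (S.join c' (S.join b c'))) := by rw [jba]
      _ = S.join c' (S.join a (S.join b c')) := S.jreg' c' a b
      _ = S.join c' (S.join (S.join a b) c') :=
            congrArg (S.join c') (S.join_assoc a b c').symm
      _ = S.join c' (S.join a c') := by rw [jab]
  · -- c' = a' ∧ c ∧ a'
    calc c' = S.meet b' (S.meet c b') := hc'
      _ = S.meet (S.meet a' (S.meet b a'))
            (S.meet c (S.meet a' (S.meet b a'))) := by rw [hb']
      _ = S.meet a' (S.meet b (S.meet a' (S.meet c (S.meet a' (S.meet b a'))))) := by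
            simp only [S.meet_assoc]
      _ = S.meet a' (S.meet b (S.meet c (S.meet a' (S.meet b a')))) :=
            S.reg_t a' b c (S.meet b a')
      _ = S.meet a' (S.meet (S.meet b c) (S.meet a' (S.meet b a'))) :=
            congrArg (S.meet a') (S.meet_assoc b c _).symm
      _ = S.meet a' (S.meet (S.meet b c) (S.meet b a')) := S.reg' a' (S.meet b c) b
      _ = S.meet a' (S.meet c (S.meet b a')) := by rw [mbc]
      _ = S.meet a' (S.meet (S.meet c b) a') :=
            congrArg (S.meet a') (S.meet_assoc c b a').symm
      _ = S.meet a' (S.meet c a') := by rw [mcb]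
end

section
/- In a left-handed skew lattice satisfying the categorical implication (x ≥ y ⪰ z implies x ∧ (y ∨ z) = y ∨ (x ∧ z)), the identity x ∧ (y ∨ (x ∧ y ∧ z)) = x ∧ y holds. -/
theorem skew_lh_cat_implies_short {α : Type*} (S : SkewLattice α)
    (lh₁ : ∀ x y, S.meet x (S.meet y x) = S.meet x y)
    (lh₂ : ∀ x y, S.join x (S.join y x) = S.join y x)
    (hcat : ∀ x y z, S.geq x y → S.succeq y z →
      S.meet x (S.join y z) = S.join y (S.meet x z)) :
    ∀ x y z, S.meet x (S.join y (S.meet x (S.meet y z))) = S.meet x y := by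
  intro x y z
  have h0 : (S.meet x (S.meet y z)) = (S.meet (S.meet x y) z) := (S.meet_assoc x y z).symm
  have h1 : (S.meet x (S.meet y z)) = (S.meet (S.meet x y) z) := h0
  have h2 : (S.join y (S.meet x (S.meet y z))) = (S.join y (S.meet (S.meet x y) z)) := congrArg₂ S.join rfl h1
  have h3 : (S.join y (S.meet x (S.meet y z))) = (S.join y (S.meet (S.meet x y) z)) := h2
  have h4 : (S.meet x (S.join y (S.meet x (S.meet y z)))) = (S.meet x (S.join y (S.meet (S.meet x y) z))) := congrArg₂ S.meet rfl h3
  have h5 : (S.meet x (S.join y (S.meet (S.meet x y) z))) = (S.meet x (S.meet (S.join y (S.meet (S.meet x y) z)) x)) := (lh₁ x (S.join y (S.meet (S.meet x y) z))).symm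
  have h6 : x = (S.meet x (S.join x (S.meet (S.join x y) (S.join x (S.meet y x))))) := (S.absorb₁ x (S.meet (S.join x y) (S.join x (S.meet y x)))).symm
  have h7 : x = (S.join (S.meet (S.join x y) x) x) := (S.absorb₄ x (S.join x y)).symm
  have h8 : x = (S.join (S.meet (S.join x y) x) x) := h7
  have h9 : (S.join x (S.meet y x)) = (S.join (S.join (S.meet (S.join x y) x) x) (S.meet y x)) := congrArg₂ S.join h8 rfl
  have h10 : (S.join (S.join (S.meet (S.join x y) x) x) (S.meet y x)) = (S.join (S.meet (S.join x y) x) (S.join x (S.meet y x))) := S.join_assoc (S.meet (S.join x y) x) x (S.meet y x)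
  have h11 : (S.join x (S.meet y x)) = (S.join (S.meet (S.join x y) x) (S.join x (S.meet y x))) := (h9).trans h10
  have h12 : (S.meet (S.join x y) (S.join x (S.meet y x))) = (S.meet (S.join x y) (S.join (S.meet (S.join x y) x) (S.join x (S.meet y x)))) := congrArg₂ S.meet rfl h11
  have h13 : (S.join (S.join x y) (S.meet (S.join x y) x)) = (S.join x y) := S.absorb₃ (S.join x y) x
  have h14 : (S.join (S.join x y) (S.meet (S.join x y) x)) = (S.join x y) := h13
  have h15 : (S.join (S.meet (S.join x y) x) (S.join x y)) = (S.join (S.join (S.meet (S.join x y) x) x) y) := (S.join_assoc (S.meet (S.join x y) x) x y).symm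
  have h16 : (S.join (S.join (S.meet (S.join x y) x) x) y) = (S.join x y) := congrArg₂ S.join (h8).symm rfl
  have h17 : (S.join (S.meet (S.join x y) x) (S.join x y)) = (S.join x y) := (h15).trans h16
  have h18 : (S.join (S.join x (S.meet y x)) (S.meet (S.join x y) x)) = (S.join x (S.join (S.meet y x) (S.meet (S.join x y) x))) := S.join_assoc x (S.meet y x) (S.meet (S.join x y) x)
  have h19 : (S.join (S.join x (S.meet y x)) (S.meet (S.join x y) x)) = (S.join x (S.join (S.meet y x) (S.meet (S.join x y) x))) := h18
  have h20 : (S.join (S.meet (S.join x y) x) (S.join (S.join x (S.meet y x)) (S.meet (S.join x y) x))) = (S.join (S.meet (S.join x y) x) (S.join x (S.join (S.meet y x) (S.meet (S.join x y) x)))) := congrArg₂ S.join rfl h19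
  have h21 : (S.join (S.meet (S.join x y) x) (S.join x (S.join (S.meet y x) (S.meet (S.join x y) x)))) = (S.join (S.join (S.meet (S.join x y) x) x) (S.join (S.meet y x) (S.meet (S.join x y) x))) := (S.join_assoc (S.meet (S.join x y) x) x (S.join (S.meet y x) (S.meet (S.join x y) x))).symm
  have h22 : (S.join (S.join (S.meet (S.join x y) x) x) (S.join (S.meet y x) (S.meet (S.join x y) x))) = (S.join x (S.join (S.meet y x) (S.meet (S.join x y) x))) := congrArg₂ S.join (h8).symm rfl
  have h23 : (S.meet (S.join x y) x) = (S.join (S.meet (S.join x y) x) (S.meet (S.meet (S.join x y) x) y)) := (S.absorb₃ (S.meet (S.join x y) x) y).symm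
  have h24 : (S.meet (S.join x y) x) = (S.join (S.meet (S.join x y) x) (S.meet (S.meet (S.join x y) x) y)) := h23
  have h25 : (S.join (S.meet y x) (S.meet (S.join x y) x)) = (S.join (S.meet y x) (S.join (S.meet (S.join x y) x) (S.meet (S.meet (S.join x y) x) y))) := congrArg₂ S.join rfl h24
  have h26 : (S.join (S.meet y x) (S.join (S.meet (S.join x y) x) (S.meet (S.meet (S.join x y) x) y))) = (S.join (S.join (S.meet y x) (S.meet (S.join x y) x)) (S.meet (S.meet (S.join x y) x) y)) := (S.join_assoc (S.meet y x) (S.meet (S.join x y) x) (S.meet (S.meet (S.join x y) x) y)).symm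
  have h27 : (S.join (S.meet y x) (S.meet (S.join x y) x)) = (S.join (S.join (S.meet y x) (S.meet (S.join x y) x)) (S.meet (S.meet (S.join x y) x) y)) := (h25).trans h26
  have h28 : (S.join x (S.join (S.meet y x) (S.meet (S.join x y) x))) = (S.join x (S.join (S.join (S.meet y x) (S.meet (S.join x y) x)) (S.meet (S.meet (S.join x y) x) y))) := congrArg₂ S.join rfl h27
  have h29 : (S.join x (S.join (S.join (S.meet y x) (S.meet (S.join x y) x)) (S.meet (S.meet (S.join x y) x) y))) = (S.join (S.join x (S.join (S.meet y x) (S.meet (S.join x y) x))) (S.meet (S.meet (S.join x y) x) y)) := (S.join_assoc x (S.join (S.meet y x) (S.meet (S.join x y) x)) (S.meet (S.meet (S.join x y) x) y)).symm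
  have h30 : (S.meet (S.meet (S.join x y) x) y) = (S.meet (S.join x y) (S.meet x y)) := S.meet_assoc (S.join x y) x y
  have h31 : (S.meet x y) = (S.join (S.meet y (S.meet x y)) (S.meet x y)) := (S.absorb₄ (S.meet x y) y).symm
  have h32 : (S.meet y (S.meet x y)) = (S.meet y x) := lh₁ y x
  have h33 : (S.meet y (S.meet x y)) = (S.meet y x) := h32
  have h34 : (S.join (S.meet y (S.meet x y)) (S.meet x y)) = (S.join (S.meet y x) (S.meet x y)) := congrArg₂ S.join h33 rfl
  have h35 : (S.meet x y) = (S.join (S.meet y x) (S.meet x y)) := (h31).trans h34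
  have h36 : (S.meet (S.join x y) (S.meet x y)) = (S.meet (S.join x y) (S.join (S.meet y x) (S.meet x y))) := congrArg₂ S.meet rfl h35
  have h37 : (S.join (S.join x y) (S.meet y x)) = (S.join x (S.join y (S.meet y x))) := S.join_assoc x y (S.meet y x)
  have h38 : (S.join y (S.meet y x)) = (S.join y (S.meet y (S.meet x y))) := congrArg₂ S.join rfl (h33).symm
  have h39 : (S.join y y) = y := S.join_idem y
  have h40 : (S.join y y) = y := h39
  have h41 : (S.join y (S.join (S.meet x y) y)) = (S.join (S.meet x y) y) := lh₂ y (S.meet x y)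
  have h42 : (S.join (S.meet x y) y) = y := S.absorb₄ y x
  have h43 : (S.join y (S.join (S.meet x y) y)) = y := (h41).trans h42
  have h44 : (S.join y (S.meet y (S.meet x y))) = (S.meet y (S.join y (S.meet x y))) := (hcat y y (S.meet x y) ⟨h40, h40⟩ h43).symm
  have h45 : (S.meet y (S.join y (S.meet x y))) = y := S.absorb₁ y (S.meet x y)
  have h46 : (S.join y (S.meet y x)) = y := ((h38).trans h44).trans h45
  have h47 : (S.join x (S.join y (S.meet y x))) = (S.join x y) := congrArg₂ S.join rfl h46
  have h48 : (S.join (S.join x y) (S.meet y x)) = (S.join x y) := (h37).trans h47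
  have h49 : (S.join x y) = (S.join y (S.join x y)) := (lh₂ y x).symm
  have h50 : (S.join x y) = (S.join y (S.join x y)) := h49
  have h51 : (S.join (S.meet y x) (S.join x y)) = (S.join (S.meet y x) (S.join y (S.join x y))) := congrArg₂ S.join rfl h50
  have h52 : (S.join (S.meet y x) (S.join y (S.join x y))) = (S.join (S.join (S.meet y x) y) (S.join x y)) := (S.join_assoc (S.meet y x) y (S.join x y)).symm
  have h53 : (S.join (S.meet y x) y) = (S.join (S.meet y x) (S.join y (S.meet y x))) := congrArg₂ S.join rfl (h46).symm
  have h54 : (S.join (S.meet y x) (S.join y (S.meet y x))) = (S.join y (S.meet y x)) := lh₂ (S.meet y x) y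
  have h55 : (S.join (S.meet y x) y) = y := ((((h53).trans h54).trans h38).trans h44).trans h45
  have h56 : (S.join (S.join (S.meet y x) y) (S.join x y)) = (S.join y (S.join x y)) := congrArg₂ S.join h55 rfl
  have h57 : (S.join (S.meet y x) (S.join x y)) = (S.join x y) := (((h51).trans h52).trans h56).trans (h49).symm
  have h58 : (S.join (S.meet y x) (S.join (S.meet x y) (S.meet y x))) = (S.join (S.join (S.meet y x) (S.meet x y)) (S.meet y x)) := (S.join_assoc (S.meet y x) (S.meet x y) (S.meet y x)).symm
  have h59 : (S.join (S.join (S.meet y x) (S.meet x y)) (S.meet y x)) = (S.join (S.meet x y) (S.meet y x)) := congrArg₂ S.join (h35).symm rfl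
  have h60 : (S.meet x y) = (S.meet (S.join y (S.meet x y)) (S.meet x y)) := (S.absorb₂ (S.meet x y) y).symm
  have h61 : (S.meet (S.join y (S.meet x y)) (S.meet x y)) = (S.meet (S.meet (S.join y (S.meet x y)) x) y) := (S.meet_assoc (S.join y (S.meet x y)) x y).symm
  have h62 : (S.join y (S.join (S.meet x y) y)) = (S.join (S.join y (S.meet x y)) y) := (S.join_assoc y (S.meet x y) y).symm
  have h63 : (S.join y (S.meet x y)) = (S.join (S.join y (S.meet x y)) (S.meet (S.join y (S.meet x y)) x)) := (S.absorb₃ (S.join y (S.meet x y)) x).symm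
  have h64 : (S.join (S.join y (S.meet x y)) (S.meet (S.join y (S.meet x y)) x)) = (S.join (S.meet (S.join y (S.meet x y)) x) (S.join (S.join y (S.meet x y)) (S.meet (S.join y (S.meet x y)) x))) := (lh₂ (S.meet (S.join y (S.meet x y)) x) (S.join y (S.meet x y))).symm
  have h65 : (S.join (S.join y (S.meet x y)) (S.meet (S.join y (S.meet x y)) x)) = (S.join y (S.meet x y)) := (h63).symm
  have h66 : (S.join (S.meet (S.join y (S.meet x y)) x) (S.join (S.join y (S.meet x y)) (S.meet (S.join y (S.meet x y)) x))) = (S.join (S.meet (S.join y (S.meet x y)) x) (S.join y (S.meet x y))) := congrArg₂ S.join rfl h65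
  have h67 : (S.join y (S.meet x y)) = (S.join (S.meet (S.join y (S.meet x y)) x) (S.join y (S.meet x y))) := ((h63).trans h64).trans h66
  have h68 : (S.join (S.join y (S.meet x y)) y) = (S.join (S.join (S.meet (S.join y (S.meet x y)) x) (S.join y (S.meet x y))) y) := congrArg₂ S.join h67 rfl
  have h69 : (S.join (S.join (S.meet (S.join y (S.meet x y)) x) (S.join y (S.meet x y))) y) = (S.join (S.meet (S.join y (S.meet x y)) x) (S.join (S.join y (S.meet x y)) y)) := S.join_assoc (S.meet (S.join y (S.meet x y)) x) (S.join y (S.meet x y)) y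
  have h70 : (S.join (S.join y (S.meet x y)) y) = y := (((h62).symm).trans h41).trans h42
  have h71 : (S.join (S.meet (S.join y (S.meet x y)) x) (S.join (S.join y (S.meet x y)) y)) = (S.join (S.meet (S.join y (S.meet x y)) x) y) := congrArg₂ S.join rfl h70
  have h72 : y = (S.join (S.meet (S.join y (S.meet x y)) x) y) := ((((((h42).symm).trans (h41).symm).trans h62).trans h68).trans h69).trans h71
  have h73 : (S.meet (S.meet (S.join y (S.meet x y)) x) y) = (S.meet (S.meet (S.join y (S.meet x y)) x) (S.join (S.meet (S.join y (S.meet x y)) x) y)) := congrArg₂ S.meet rfl h72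
  have h74 : (S.meet (S.meet (S.join y (S.meet x y)) x) (S.join (S.meet (S.join y (S.meet x y)) x) y)) = (S.meet (S.join y (S.meet x y)) x) := S.absorb₁ (S.meet (S.join y (S.meet x y)) x) y
  have h75 : (S.meet (S.join y (S.meet x y)) x) = (S.meet (S.meet (S.join y (S.meet x y)) x) (S.join (S.meet (S.join y (S.meet x y)) x) (S.join y (S.meet (S.meet x y) z)))) := (S.absorb₁ (S.meet (S.join y (S.meet x y)) x) (S.join y (S.meet (S.meet x y) z))).symm
  have h76 : (S.join y (S.meet x (S.meet y z))) = (S.join (S.join y y) (S.meet (S.meet x y) z)) := congrArg₂ S.join (h40).symm h1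
  have h77 : (S.join (S.join y y) (S.meet (S.meet x y) z)) = (S.join y (S.join y (S.meet (S.meet x y) z))) := S.join_assoc y y (S.meet (S.meet x y) z)
  have h78 : (S.join y (S.meet (S.meet x y) z)) = (S.join y (S.join y (S.meet (S.meet x y) z))) := (((h2).symm).trans h76).trans h77
  have h79 : (S.join (S.meet (S.join y (S.meet x y)) x) (S.join y (S.meet (S.meet x y) z))) = (S.join (S.meet (S.join y (S.meet x y)) x) (S.join y (S.join y (S.meet (S.meet x y) z)))) := congrArg₂ S.join rfl h78
  have h80 : (S.join (S.meet (S.join y (S.meet x y)) x) (S.join y (S.join y (S.meet (S.meet x y) z)))) = (S.join (S.join (S.meet (S.join y (S.meet x y)) x) y) (S.join y (S.meet (S.meet x y) z))) := (S.join_assoc (S.meet (S.join y (S.meet x y)) x) y (S.join y (S.meet (S.meet x y) z))).symm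
  have h81 : y = (S.join (S.meet x y) y) := (h42).symm
  have h82 : (S.join y (S.meet x (S.meet y z))) = (S.join (S.join (S.meet x y) y) (S.meet (S.meet x y) z)) := congrArg₂ S.join h81 h1
  have h83 : (S.join (S.join (S.meet x y) y) (S.meet (S.meet x y) z)) = (S.join (S.meet x y) (S.join y (S.meet (S.meet x y) z))) := S.join_assoc (S.meet x y) y (S.meet (S.meet x y) z)
  have h84 : (S.join y (S.meet (S.meet x y) z)) = (S.join (S.meet x y) (S.join y (S.meet (S.meet x y) z))) := (((h2).symm).trans h82).trans h83
  have h85 : (S.join (S.join (S.meet (S.join y (S.meet x y)) x) y) (S.join y (S.meet (S.meet x y) z))) = (S.join (S.join (S.meet (S.join y (S.meet x y)) x) y) (S.join (S.meet x y) (S.join y (S.meet (S.meet x y) z)))) := congrArg₂ S.join rfl h84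
  have h86 : (S.join (S.join (S.meet (S.join y (S.meet x y)) x) y) (S.join (S.meet x y) (S.join y (S.meet (S.meet x y) z)))) = (S.join (S.join (S.join (S.meet (S.join y (S.meet x y)) x) y) (S.meet x y)) (S.join y (S.meet (S.meet x y) z))) := (S.join_assoc (S.join (S.meet (S.join y (S.meet x y)) x) y) (S.meet x y) (S.join y (S.meet (S.meet x y) z))).symm
  have h87 : (S.join (S.join (S.meet (S.join y (S.meet x y)) x) y) (S.meet x y)) = (S.join (S.meet (S.join y (S.meet x y)) x) (S.join y (S.meet x y))) := S.join_assoc (S.meet (S.join y (S.meet x y)) x) y (S.meet x y)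
  have h88 : (S.join (S.join (S.meet (S.join y (S.meet x y)) x) y) (S.meet x y)) = (S.join y (S.meet x y)) := (((h87).trans (h66).symm).trans (h64).symm).trans (h63).symm
  have h89 : (S.join (S.join (S.join (S.meet (S.join y (S.meet x y)) x) y) (S.meet x y)) (S.join y (S.meet (S.meet x y) z))) = (S.join (S.join y (S.meet x y)) (S.join y (S.meet (S.meet x y) z))) := congrArg₂ S.join h88 rfl
  have h90 : (S.join (S.join y (S.meet x y)) (S.join y (S.meet (S.meet x y) z))) = (S.join (S.join (S.join y (S.meet x y)) y) (S.meet (S.meet x y) z)) := (S.join_assoc (S.join y (S.meet x y)) y (S.meet (S.meet x y) z)).symm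
  have h91 : (S.join (S.join (S.join y (S.meet x y)) y) (S.meet (S.meet x y) z)) = (S.join y (S.meet x (S.meet y z))) := congrArg₂ S.join h70 (h1).symm
  have h92 : (S.join (S.meet (S.join y (S.meet x y)) x) (S.join y (S.meet (S.meet x y) z))) = (S.join y (S.meet x (S.meet y z))) := ((((((h79).trans h80).trans h85).trans h86).trans h89).trans h90).trans h91
  have h93 : (S.meet (S.meet (S.join y (S.meet x y)) x) (S.join (S.meet (S.join y (S.meet x y)) x) (S.join y (S.meet (S.meet x y) z)))) = (S.meet (S.meet (S.join y (S.meet x y)) x) (S.join y (S.meet x (S.meet y z)))) := congrArg₂ S.meet rfl h92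
  have h94 : (S.meet (S.meet (S.join y (S.meet x y)) x) (S.join y (S.meet x (S.meet y z)))) = (S.meet (S.join y (S.meet x y)) (S.meet x (S.join y (S.meet x (S.meet y z))))) := S.meet_assoc (S.join y (S.meet x y)) x (S.join y (S.meet x (S.meet y z)))
  have h95 : (S.join y (S.meet x y)) = (S.meet (S.join y (S.meet x y)) (S.join (S.join y (S.meet x y)) y)) := (S.absorb₁ (S.join y (S.meet x y)) y).symm
  have h96 : (S.meet (S.join y (S.meet x y)) (S.join (S.join y (S.meet x y)) y)) = (S.meet (S.join y (S.meet x y)) y) := congrArg₂ S.meet rfl h70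
  have h97 : (S.join y (S.meet x y)) = (S.meet (S.join y (S.meet x y)) y) := (h95).trans h96
  have h98 : (S.meet x (S.join y (S.meet x (S.meet y z)))) = (S.meet x (S.join y (S.meet (S.meet x y) z))) := h4
  have h99 : (S.meet (S.join y (S.meet x y)) (S.meet x (S.join y (S.meet x (S.meet y z))))) = (S.meet (S.meet (S.join y (S.meet x y)) y) (S.meet x (S.join y (S.meet (S.meet x y) z)))) := congrArg₂ S.meet h97 h98
  have h100 : (S.meet (S.meet (S.join y (S.meet x y)) y) (S.meet x (S.join y (S.meet (S.meet x y) z)))) = (S.meet (S.join y (S.meet x y)) (S.meet y (S.meet x (S.join y (S.meet (S.meet x y) z))))) := S.meet_assoc (S.join y (S.meet x y)) y (S.meet x (S.join y (S.meet (S.meet x y) z)))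
  have h101 : (S.meet y (S.meet x (S.join y (S.meet (S.meet x y) z)))) = (S.meet (S.meet y x) (S.join y (S.meet (S.meet x y) z))) := (S.meet_assoc y x (S.join y (S.meet (S.meet x y) z))).symm
  have h102 : (S.meet (S.meet y x) (S.join y (S.meet (S.meet x y) z))) = (S.meet (S.meet y (S.meet x y)) (S.join y (S.meet (S.meet x y) z))) := congrArg₂ S.meet (h33).symm rfl
  have h103 : (S.meet (S.meet y (S.meet x y)) (S.join y (S.meet (S.meet x y) z))) = (S.meet y (S.meet (S.meet x y) (S.join y (S.meet (S.meet x y) z)))) := S.meet_assoc y (S.meet x y) (S.join y (S.meet (S.meet x y) z))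
  have h104 : (S.meet (S.meet x y) (S.join y (S.meet (S.meet x y) z))) = (S.meet (S.meet x y) (S.join y (S.meet x (S.meet y z)))) := congrArg₂ S.meet rfl (h3).symm
  have h105 : (S.meet (S.meet x y) (S.join y (S.meet x (S.meet y z)))) = (S.meet x (S.meet y (S.join y (S.meet x (S.meet y z))))) := S.meet_assoc x y (S.join y (S.meet x (S.meet y z)))
  have h106 : (S.meet y (S.join y (S.meet x (S.meet y z)))) = (S.meet y (S.join y (S.meet (S.meet x y) z))) := congrArg₂ S.meet rfl h3
  have h107 : (S.meet y (S.join y (S.meet (S.meet x y) z))) = y := S.absorb₁ y (S.meet (S.meet x y) z)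
  have h108 : (S.meet y (S.join y (S.meet x (S.meet y z)))) = y := (h106).trans h107
  have h109 : (S.meet x (S.meet y (S.join y (S.meet x (S.meet y z))))) = (S.meet x y) := congrArg₂ S.meet rfl h108
  have h110 : (S.meet (S.meet x y) (S.join y (S.meet (S.meet x y) z))) = (S.meet x y) := ((h104).trans h105).trans h109
  have h111 : (S.meet y (S.meet (S.meet x y) (S.join y (S.meet (S.meet x y) z)))) = (S.meet y (S.meet x y)) := congrArg₂ S.meet rfl h110
  have h112 : (S.meet y (S.meet x (S.join y (S.meet (S.meet x y) z)))) = (S.meet y x) := ((((h101).trans h102).trans h103).trans h111).trans h32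
  have h113 : (S.meet (S.join y (S.meet x y)) (S.meet y (S.meet x (S.join y (S.meet (S.meet x y) z))))) = (S.meet (S.join y (S.meet x y)) (S.meet y x)) := congrArg₂ S.meet rfl h112
  have h114 : (S.meet x y) = (S.meet (S.join y (S.meet x y)) (S.meet y x)) := (((((((((h60).trans h61).trans h73).trans h74).trans h75).trans h93).trans h94).trans h99).trans h100).trans h113
  have h115 : (S.join (S.meet x y) (S.meet y x)) = (S.join (S.meet (S.join y (S.meet x y)) (S.meet y x)) (S.meet y x)) := congrArg₂ S.join h114 rfl
  have h116 : (S.join (S.meet (S.join y (S.meet x y)) (S.meet y x)) (S.meet y x)) = (S.meet y x) := S.absorb₄ (S.meet y x) (S.join y (S.meet x y))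
  have h117 : (S.join (S.meet y x) (S.join (S.meet x y) (S.meet y x))) = (S.meet y x) := (((h58).trans h59).trans h115).trans h116
  have h118 : (S.meet (S.join x y) (S.join (S.meet y x) (S.meet x y))) = (S.join (S.meet y x) (S.meet (S.join x y) (S.meet x y))) := hcat (S.join x y) (S.meet y x) (S.meet x y) ⟨h48, h57⟩ h117
  have h119 : (S.meet (S.join x y) (S.meet x y)) = (S.meet (S.meet (S.join x y) x) y) := (h30).symm
  have h120 : (S.join (S.meet y x) (S.meet (S.join x y) (S.meet x y))) = (S.join (S.meet y x) (S.meet (S.meet (S.join x y) x) y)) := congrArg₂ S.join rfl h119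
  have h121 : (S.meet (S.meet (S.join x y) x) y) = (S.join (S.meet y x) (S.meet (S.meet (S.join x y) x) y)) := (((h30).trans h36).trans h118).trans h120
  have h122 : (S.join (S.join x (S.join (S.meet y x) (S.meet (S.join x y) x))) (S.meet (S.meet (S.join x y) x) y)) = (S.join (S.join (S.join x (S.meet y x)) (S.meet (S.join x y) x)) (S.join (S.meet y x) (S.meet (S.meet (S.join x y) x) y))) := congrArg₂ S.join (h19).symm h121
  have h123 : (S.join (S.join (S.join x (S.meet y x)) (S.meet (S.join x y) x)) (S.join (S.meet y x) (S.meet (S.meet (S.join x y) x) y))) = (S.join (S.join (S.join (S.join x (S.meet y x)) (S.meet (S.join x y) x)) (S.meet y x)) (S.meet (S.meet (S.join x y) x) y)) := (S.join_assoc (S.join (S.join x (S.meet y x)) (S.meet (S.join x y) x)) (S.meet y x) (S.meet (S.meet (S.join x y) x) y)).symm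
  have h124 : (S.meet y x) = (S.join (S.meet x y) (S.meet y x)) := ((h116).symm).trans (h115).symm
  have h125 : (S.join (S.join (S.join x (S.meet y x)) (S.meet (S.join x y) x)) (S.meet y x)) = (S.join (S.join (S.join x (S.meet y x)) (S.meet (S.join x y) x)) (S.join (S.meet x y) (S.meet y x))) := congrArg₂ S.join rfl h124
  have h126 : (S.join (S.join (S.join x (S.meet y x)) (S.meet (S.join x y) x)) (S.join (S.meet x y) (S.meet y x))) = (S.join (S.join (S.join (S.join x (S.meet y x)) (S.meet (S.join x y) x)) (S.meet x y)) (S.meet y x)) := (S.join_assoc (S.join (S.join x (S.meet y x)) (S.meet (S.join x y) x)) (S.meet x y) (S.meet y x)).symm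
  have h127 : (S.join (S.join (S.join x (S.meet y x)) (S.meet (S.join x y) x)) (S.meet x y)) = (S.join (S.join x (S.join (S.meet y x) (S.meet (S.join x y) x))) (S.meet x y)) := congrArg₂ S.join h19 rfl
  have h128 : (S.join (S.join x (S.join (S.meet y x) (S.meet (S.join x y) x))) (S.meet x y)) = (S.join x (S.join (S.join (S.meet y x) (S.meet (S.join x y) x)) (S.meet x y))) := S.join_assoc x (S.join (S.meet y x) (S.meet (S.join x y) x)) (S.meet x y)
  have h129 : (S.join (S.join (S.meet y x) (S.meet (S.join x y) x)) (S.meet x y)) = (S.join (S.meet y x) (S.join (S.meet (S.join x y) x) (S.meet x y))) := S.join_assoc (S.meet y x) (S.meet (S.join x y) x) (S.meet x y)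
  have h130 : (S.join (S.meet (S.join x y) x) (S.meet x y)) = (S.join (S.meet x y) (S.join (S.meet (S.join x y) x) (S.meet x y))) := (lh₂ (S.meet x y) (S.meet (S.join x y) x)).symm
  have h131 : (S.join (S.meet (S.join x y) x) (S.meet x y)) = (S.join (S.meet x y) (S.join (S.meet (S.join x y) x) (S.meet x y))) := h130
  have h132 : (S.join (S.meet y x) (S.join (S.meet (S.join x y) x) (S.meet x y))) = (S.join (S.meet y x) (S.join (S.meet x y) (S.join (S.meet (S.join x y) x) (S.meet x y)))) := congrArg₂ S.join rfl h131
  have h133 : (S.join (S.meet y x) (S.join (S.meet x y) (S.join (S.meet (S.join x y) x) (S.meet x y)))) = (S.join (S.join (S.meet y x) (S.meet x y)) (S.join (S.meet (S.join x y) x) (S.meet x y))) := (S.join_assoc (S.meet y x) (S.meet x y) (S.join (S.meet (S.join x y) x) (S.meet x y))).symm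
  have h134 : (S.join (S.join (S.meet y x) (S.meet x y)) (S.join (S.meet (S.join x y) x) (S.meet x y))) = (S.join (S.meet x y) (S.join (S.meet (S.join x y) x) (S.meet x y))) := congrArg₂ S.join (h35).symm rfl
  have h135 : (S.join (S.join (S.meet y x) (S.meet (S.join x y) x)) (S.meet x y)) = (S.join (S.meet (S.join x y) x) (S.meet x y)) := ((((h129).trans h132).trans h133).trans h134).trans (h130).symm
  have h136 : (S.join x (S.join (S.join (S.meet y x) (S.meet (S.join x y) x)) (S.meet x y))) = (S.join x (S.join (S.meet (S.join x y) x) (S.meet x y))) := congrArg₂ S.join rfl h135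
  have h137 : (S.join x (S.join (S.meet (S.join x y) x) (S.meet x y))) = (S.join (S.join x (S.meet (S.join x y) x)) (S.meet x y)) := (S.join_assoc x (S.meet (S.join x y) x) (S.meet x y)).symm
  have h138 : (S.join (S.join (S.join x (S.meet y x)) (S.meet (S.join x y) x)) (S.meet x y)) = (S.join (S.join x (S.meet (S.join x y) x)) (S.meet x y)) := (((h127).trans h128).trans h136).trans h137
  have h139 : (S.join (S.join (S.join (S.join x (S.meet y x)) (S.meet (S.join x y) x)) (S.meet x y)) (S.meet y x)) = (S.join (S.join (S.join x (S.meet (S.join x y) x)) (S.meet x y)) (S.meet y x)) := congrArg₂ S.join h138 rfl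
  have h140 : (S.join (S.join (S.join x (S.meet (S.join x y) x)) (S.meet x y)) (S.meet y x)) = (S.join (S.join x (S.meet (S.join x y) x)) (S.join (S.meet x y) (S.meet y x))) := S.join_assoc (S.join x (S.meet (S.join x y) x)) (S.meet x y) (S.meet y x)
  have h141 : (S.join (S.join x (S.meet (S.join x y) x)) (S.join (S.meet x y) (S.meet y x))) = (S.join (S.join x (S.meet (S.join x y) x)) (S.meet y x)) := congrArg₂ S.join rfl (h124).symm
  have h142 : (S.join (S.join (S.join x (S.meet y x)) (S.meet (S.join x y) x)) (S.meet y x)) = (S.join (S.join x (S.meet (S.join x y) x)) (S.meet y x)) := ((((h125).trans h126).trans h139).trans h140).trans h141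
  have h143 : (S.join (S.join (S.join (S.join x (S.meet y x)) (S.meet (S.join x y) x)) (S.meet y x)) (S.meet (S.meet (S.join x y) x) y)) = (S.join (S.join (S.join x (S.meet (S.join x y) x)) (S.meet y x)) (S.meet (S.meet (S.join x y) x) y)) := congrArg₂ S.join h142 rfl
  have h144 : (S.join (S.join (S.join x (S.meet (S.join x y) x)) (S.meet y x)) (S.meet (S.meet (S.join x y) x) y)) = (S.join (S.join x (S.meet (S.join x y) x)) (S.join (S.meet y x) (S.meet (S.meet (S.join x y) x) y))) := S.join_assoc (S.join x (S.meet (S.join x y) x)) (S.meet y x) (S.meet (S.meet (S.join x y) x) y)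
  have h145 : (S.join (S.join x (S.meet (S.join x y) x)) (S.join (S.meet y x) (S.meet (S.meet (S.join x y) x) y))) = (S.join (S.join x (S.meet (S.join x y) x)) (S.meet (S.meet (S.join x y) x) y)) := congrArg₂ S.join rfl (h121).symm
  have h146 : (S.join (S.join x (S.meet (S.join x y) x)) (S.meet (S.meet (S.join x y) x) y)) = (S.join x (S.join (S.meet (S.join x y) x) (S.meet (S.meet (S.join x y) x) y))) := S.join_assoc x (S.meet (S.join x y) x) (S.meet (S.meet (S.join x y) x) y)
  have h147 : (S.join x (S.join (S.meet (S.join x y) x) (S.meet (S.meet (S.join x y) x) y))) = (S.join x (S.meet (S.join x y) x)) := congrArg₂ S.join rfl (h24).symm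
  have h148 : x = (S.meet (S.join y x) x) := (S.absorb₂ x y).symm
  have h149 : (S.join y x) = (S.join (S.join y x) (S.meet (S.join y x) y)) := (S.absorb₃ (S.join y x) y).symm
  have h150 : (S.join (S.join y x) (S.join y x)) = (S.join (S.join (S.join y x) y) x) := (S.join_assoc (S.join y x) y x).symm
  have h151 : (S.join (S.join y x) y) = (S.join y (S.join x y)) := S.join_assoc y x y
  have h152 : (S.join (S.join y x) y) = (S.join x y) := (h151).trans (h49).symm
  have h153 : (S.join (S.join (S.join y x) y) x) = (S.join (S.join x y) x) := congrArg₂ S.join h152 rfl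
  have h154 : (S.join (S.join x y) x) = (S.join x (S.join y x)) := S.join_assoc x y x
  have h155 : (S.join x (S.join y x)) = (S.join y x) := lh₂ x y
  have h156 : (S.join (S.join y x) (S.join y x)) = (S.join y x) := (((h150).trans h153).trans h154).trans h155
  have h157 : (S.join y (S.join y x)) = (S.join (S.join y y) x) := (S.join_assoc y y x).symm
  have h158 : (S.join (S.join y y) x) = (S.join y x) := congrArg₂ S.join h40 rfl
  have h159 : (S.join y (S.join y x)) = (S.join y x) := (h157).trans h158
  have h160 : (S.join (S.join y x) (S.join y (S.join y x))) = (S.join (S.join y x) (S.join y x)) := congrArg₂ S.join rfl h159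
  have h161 : (S.join (S.join y x) (S.join y (S.join y x))) = (S.join y x) := ((((h160).trans h150).trans h153).trans h154).trans h155
  have h162 : (S.join (S.join y x) (S.meet (S.join y x) y)) = (S.meet (S.join y x) (S.join (S.join y x) y)) := (hcat (S.join y x) (S.join y x) y ⟨h156, h156⟩ h161).symm
  have h163 : (S.meet (S.join y x) (S.join (S.join y x) y)) = (S.meet (S.join y x) (S.join x y)) := congrArg₂ S.meet rfl h152
  have h164 : (S.join y x) = (S.meet (S.join y x) (S.join x y)) := ((h149).trans h162).trans h163
  have h165 : (S.meet (S.join y x) x) = (S.meet (S.meet (S.join y x) (S.join x y)) x) := congrArg₂ S.meet h164 rfl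
  have h166 : (S.meet (S.meet (S.join y x) (S.join x y)) x) = (S.meet (S.join y x) (S.meet (S.join x y) x)) := S.meet_assoc (S.join y x) (S.join x y) x
  have h167 : x = (S.meet (S.join y x) (S.meet (S.join x y) x)) := ((h148).trans h165).trans h166
  have h168 : (S.join x (S.meet (S.join x y) x)) = (S.join (S.meet (S.join y x) (S.meet (S.join x y) x)) (S.meet (S.join x y) x)) := congrArg₂ S.join h167 rfl
  have h169 : (S.join (S.meet (S.join y x) (S.meet (S.join x y) x)) (S.meet (S.join x y) x)) = (S.meet (S.join x y) x) := S.absorb₄ (S.meet (S.join x y) x) (S.join y x)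
  have h170 : (S.join (S.meet (S.join x y) x) (S.join (S.join x (S.meet y x)) (S.meet (S.join x y) x))) = (S.meet (S.join x y) x) := (((((((((((((h20).trans h21).trans h22).trans h28).trans h29).trans h122).trans h123).trans h143).trans h144).trans h145).trans h146).trans h147).trans h168).trans h169
  have h171 : (S.meet (S.join x y) (S.join (S.meet (S.join x y) x) (S.join x (S.meet y x)))) = (S.join (S.meet (S.join x y) x) (S.meet (S.join x y) (S.join x (S.meet y x)))) := hcat (S.join x y) (S.meet (S.join x y) x) (S.join x (S.meet y x)) ⟨h14, h17⟩ h170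
  have h172 : (S.meet (S.join x y) (S.join x (S.meet y x))) = (S.join (S.meet (S.join x y) x) (S.meet (S.join x y) (S.join x (S.meet y x)))) := (h12).trans h171
  have h173 : (S.join x (S.meet (S.join x y) (S.join x (S.meet y x)))) = (S.join x (S.join (S.meet (S.join x y) x) (S.meet (S.join x y) (S.join x (S.meet y x))))) := congrArg₂ S.join rfl h172
  have h174 : (S.join x (S.join (S.meet (S.join x y) x) (S.meet (S.join x y) (S.join x (S.meet y x))))) = (S.join (S.join x (S.meet (S.join x y) x)) (S.meet (S.join x y) (S.join x (S.meet y x)))) := (S.join_assoc x (S.meet (S.join x y) x) (S.meet (S.join x y) (S.join x (S.meet y x)))).symm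
  have h175 : (S.join x (S.meet (S.join x y) x)) = (S.meet (S.join x y) x) := (h168).trans h169
  have h176 : (S.join (S.join x (S.meet (S.join x y) x)) (S.meet (S.join x y) (S.join x (S.meet y x)))) = (S.join (S.meet (S.join x y) x) (S.meet (S.join x y) (S.join x (S.meet y x)))) := congrArg₂ S.join h175 rfl
  have h177 : (S.join x (S.meet (S.join x y) (S.join x (S.meet y x)))) = (S.meet (S.join x y) (S.join x (S.meet y x))) := ((((h173).trans h174).trans h176).trans (h171).symm).trans (h12).symm
  have h178 : (S.meet x (S.join x (S.meet (S.join x y) (S.join x (S.meet y x))))) = (S.meet x (S.meet (S.join x y) (S.join x (S.meet y x)))) := congrArg₂ S.meet rfl h177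
  have h179 : (S.meet x (S.meet (S.join x y) (S.join x (S.meet y x)))) = (S.meet (S.meet x (S.join x y)) (S.join x (S.meet y x))) := (S.meet_assoc x (S.join x y) (S.join x (S.meet y x))).symm
  have h180 : x = (S.meet x (S.join x (S.join y x))) := (S.absorb₁ x (S.join y x)).symm
  have h181 : (S.join x (S.join y x)) = (S.join y x) := h155
  have h182 : (S.meet x (S.join x (S.join y x))) = (S.meet x (S.join y x)) := congrArg₂ S.meet rfl h181
  have h183 : x = (S.meet x (S.join y x)) := (h180).trans h182
  have h184 : (S.meet x (S.join x y)) = (S.meet (S.meet x (S.join y x)) (S.join x y)) := congrArg₂ S.meet h183 rfl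
  have h185 : (S.meet (S.meet x (S.join y x)) (S.join x y)) = (S.meet x (S.meet (S.join y x) (S.join x y))) := S.meet_assoc x (S.join y x) (S.join x y)
  have h186 : (S.meet x (S.meet (S.join y x) (S.join x y))) = (S.meet x (S.join y x)) := congrArg₂ S.meet rfl (h164).symm
  have h187 : (S.meet x (S.join x y)) = x := ((((h184).trans h185).trans h186).trans (h182).symm).trans (h180).symm
  have h188 : (S.meet (S.meet x (S.join x y)) (S.join x (S.meet y x))) = (S.meet x (S.join x (S.meet y x))) := congrArg₂ S.meet h187 rfl
  have h189 : x = (S.meet x (S.join x (S.meet y x))) := (((h6).trans h178).trans h179).trans h188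
  have h190 : (S.meet x (S.meet (S.join y (S.meet (S.meet x y) z)) x)) = (S.meet (S.meet x (S.join x (S.meet y x))) (S.meet (S.join y (S.meet (S.meet x y) z)) x)) := congrArg₂ S.meet h189 rfl
  have h191 : (S.meet (S.meet x (S.join x (S.meet y x))) (S.meet (S.join y (S.meet (S.meet x y) z)) x)) = (S.meet x (S.meet (S.join x (S.meet y x)) (S.meet (S.join y (S.meet (S.meet x y) z)) x))) := S.meet_assoc x (S.join x (S.meet y x)) (S.meet (S.join y (S.meet (S.meet x y) z)) x)
  have h192 : (S.meet (S.join y (S.meet (S.meet x y) z)) x) = (S.meet (S.meet (S.join y (S.meet (S.meet x y) z)) x) (S.join (S.meet (S.join y (S.meet (S.meet x y) z)) x) y)) := (S.absorb₁ (S.meet (S.join y (S.meet (S.meet x y) z)) x) y).symm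
  have h193 : (S.meet (S.join y (S.meet (S.meet x y) z)) x) = (S.meet (S.join y (S.meet x (S.meet y z))) x) := congrArg₂ S.meet (h3).symm rfl
  have h194 : (S.meet (S.join y (S.meet (S.meet x y) z)) x) = (S.meet (S.join y (S.meet x (S.meet y z))) x) := h193
  have h195 : (S.join (S.meet (S.join y (S.meet (S.meet x y) z)) x) y) = (S.join (S.meet (S.join y (S.meet x (S.meet y z))) x) y) := congrArg₂ S.join h194 rfl
  have h196 : (S.join (S.meet x y) y) = (S.join (S.meet x y) (S.join (S.meet x y) y)) := congrArg₂ S.join rfl h81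
  have h197 : (S.join (S.meet x y) (S.join (S.meet x y) y)) = (S.join (S.join (S.meet x y) (S.meet x y)) y) := (S.join_assoc (S.meet x y) (S.meet x y) y).symm
  have h198 : (S.meet x y) = (S.join (S.meet x y) (S.meet (S.meet x y) z)) := (S.absorb₃ (S.meet x y) z).symm
  have h199 : (S.meet x y) = (S.join (S.meet x y) (S.meet (S.meet x y) z)) := h198
  have h200 : (S.join (S.meet x y) (S.meet x y)) = (S.join (S.join (S.meet x y) (S.meet (S.meet x y) z)) (S.meet x y)) := congrArg₂ S.join h199 rfl
  have h201 : (S.join (S.join (S.meet x y) (S.meet (S.meet x y) z)) (S.meet x y)) = (S.join (S.meet x y) (S.join (S.meet (S.meet x y) z) (S.meet x y))) := S.join_assoc (S.meet x y) (S.meet (S.meet x y) z) (S.meet x y)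
  have h202 : (S.join (S.meet x y) (S.join (S.meet (S.meet x y) z) (S.meet x y))) = (S.join (S.meet (S.meet x y) z) (S.meet x y)) := lh₂ (S.meet x y) (S.meet (S.meet x y) z)
  have h203 : (S.join (S.meet x y) (S.meet x y)) = (S.join (S.meet (S.meet x y) z) (S.meet x y)) := ((h200).trans h201).trans h202
  have h204 : (S.join (S.join (S.meet x y) (S.meet x y)) y) = (S.join (S.join (S.meet (S.meet x y) z) (S.meet x y)) y) := congrArg₂ S.join h203 rfl
  have h205 : (S.join (S.join (S.meet (S.meet x y) z) (S.meet x y)) y) = (S.join (S.meet (S.meet x y) z) (S.join (S.meet x y) y)) := S.join_assoc (S.meet (S.meet x y) z) (S.meet x y) y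
  have h206 : (S.join (S.meet (S.meet x y) z) (S.join (S.meet x y) y)) = (S.join (S.meet x (S.meet y z)) y) := congrArg₂ S.join (h1).symm (h81).symm
  have h207 : (S.join (S.meet x (S.meet y z)) y) = (S.join (S.meet (S.meet x y) z) y) := congrArg₂ S.join h1 rfl
  have h208 : (S.join (S.meet (S.meet x y) z) y) = (S.join y (S.join (S.meet (S.meet x y) z) y)) := (lh₂ y (S.meet (S.meet x y) z)).symm
  have h209 : (S.join y (S.join (S.meet (S.meet x y) z) y)) = (S.join (S.join y (S.meet (S.meet x y) z)) y) := (S.join_assoc y (S.meet (S.meet x y) z) y).symm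
  have h210 : y = (S.join (S.join y (S.meet (S.meet x y) z)) y) := (((((((((h42).symm).trans h196).trans h197).trans h204).trans h205).trans h206).trans h207).trans h208).trans h209
  have h211 : (S.join (S.meet (S.join y (S.meet x (S.meet y z))) x) y) = (S.join (S.meet (S.join y (S.meet (S.meet x y) z)) x) (S.join (S.join y (S.meet (S.meet x y) z)) y)) := congrArg₂ S.join (h194).symm h210
  have h212 : (S.join (S.meet (S.join y (S.meet (S.meet x y) z)) x) (S.join (S.join y (S.meet (S.meet x y) z)) y)) = (S.join (S.join (S.meet (S.join y (S.meet (S.meet x y) z)) x) (S.join y (S.meet (S.meet x y) z))) y) := (S.join_assoc (S.meet (S.join y (S.meet (S.meet x y) z)) x) (S.join y (S.meet (S.meet x y) z)) y).symm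
  have h213 : (S.join y (S.meet (S.meet x y) z)) = (S.join (S.join y (S.meet (S.meet x y) z)) (S.meet (S.join y (S.meet (S.meet x y) z)) x)) := (S.absorb₃ (S.join y (S.meet (S.meet x y) z)) x).symm
  have h214 : (S.join y (S.meet (S.meet x y) z)) = (S.join (S.join y (S.meet (S.meet x y) z)) (S.meet (S.join y (S.meet (S.meet x y) z)) x)) := h213
  have h215 : (S.join (S.meet (S.join y (S.meet (S.meet x y) z)) x) (S.join y (S.meet (S.meet x y) z))) = (S.join (S.meet (S.join y (S.meet (S.meet x y) z)) x) (S.join (S.join y (S.meet (S.meet x y) z)) (S.meet (S.join y (S.meet (S.meet x y) z)) x))) := congrArg₂ S.join rfl h214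
  have h216 : (S.join (S.meet (S.join y (S.meet (S.meet x y) z)) x) (S.join (S.join y (S.meet (S.meet x y) z)) (S.meet (S.join y (S.meet (S.meet x y) z)) x))) = (S.join (S.join y (S.meet (S.meet x y) z)) (S.meet (S.join y (S.meet (S.meet x y) z)) x)) := lh₂ (S.meet (S.join y (S.meet (S.meet x y) z)) x) (S.join y (S.meet (S.meet x y) z))
  have h217 : (S.join (S.meet (S.join y (S.meet (S.meet x y) z)) x) (S.join y (S.meet (S.meet x y) z))) = (S.join y (S.meet x (S.meet y z))) := (((h215).trans h216).trans (h213).symm).trans (h2).symm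
  have h218 : (S.join (S.join (S.meet (S.join y (S.meet (S.meet x y) z)) x) (S.join y (S.meet (S.meet x y) z))) y) = (S.join (S.join y (S.meet x (S.meet y z))) y) := congrArg₂ S.join h217 rfl
  have h219 : (S.join (S.join y (S.meet x (S.meet y z))) y) = (S.join (S.join y (S.meet (S.meet x y) z)) y) := congrArg₂ S.join h3 rfl
  have h220 : (S.join (S.meet (S.join y (S.meet (S.meet x y) z)) x) y) = y := (((((((((((((h195).trans h211).trans h212).trans h218).trans h219).trans (h209).symm).trans (h208).symm).trans (h207).symm).trans (h206).symm).trans (h205).symm).trans (h204).symm).trans (h197).symm).trans (h196).symm).trans h42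
  have h221 : (S.meet (S.meet (S.join y (S.meet (S.meet x y) z)) x) (S.join (S.meet (S.join y (S.meet (S.meet x y) z)) x) y)) = (S.meet (S.meet (S.join y (S.meet x (S.meet y z))) x) y) := congrArg₂ S.meet h194 h220
  have h222 : (S.meet (S.meet (S.join y (S.meet x (S.meet y z))) x) y) = (S.meet (S.join y (S.meet x (S.meet y z))) (S.meet x y)) := S.meet_assoc (S.join y (S.meet x (S.meet y z))) x y
  have h223 : (S.join y (S.meet (S.meet x y) z)) = (S.meet (S.join y (S.meet (S.meet x y) z)) (S.join (S.join y (S.meet (S.meet x y) z)) y)) := (S.absorb₁ (S.join y (S.meet (S.meet x y) z)) y).symm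
  have h224 : (S.meet (S.join y (S.meet (S.meet x y) z)) (S.join (S.join y (S.meet (S.meet x y) z)) y)) = (S.meet (S.join y (S.meet (S.meet x y) z)) y) := congrArg₂ S.meet rfl (h210).symm
  have h225 : (S.join y (S.meet x (S.meet y z))) = (S.meet (S.join y (S.meet (S.meet x y) z)) y) := ((h2).trans h223).trans h224
  have h226 : (S.meet (S.join y (S.meet x (S.meet y z))) (S.meet x y)) = (S.meet (S.meet (S.join y (S.meet (S.meet x y) z)) y) (S.meet x y)) := congrArg₂ S.meet h225 rfl
  have h227 : (S.meet (S.meet (S.join y (S.meet (S.meet x y) z)) y) (S.meet x y)) = (S.meet (S.join y (S.meet (S.meet x y) z)) (S.meet y (S.meet x y))) := S.meet_assoc (S.join y (S.meet (S.meet x y) z)) y (S.meet x y)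
  have h228 : (S.meet y x) = (S.join (S.meet y x) (S.meet (S.meet y x) (S.meet y z))) := (S.absorb₃ (S.meet y x) (S.meet y z)).symm
  have h229 : (S.meet (S.meet y x) (S.meet y z)) = (S.meet y (S.meet x (S.meet y z))) := S.meet_assoc y x (S.meet y z)
  have h230 : (S.meet (S.meet y x) (S.meet y z)) = (S.meet y (S.meet x (S.meet y z))) := h229
  have h231 : (S.join (S.meet y x) (S.meet (S.meet y x) (S.meet y z))) = (S.join (S.meet y x) (S.meet y (S.meet x (S.meet y z)))) := congrArg₂ S.join rfl h230
  have h232 : (S.meet y (S.meet x (S.meet y z))) = (S.meet y (S.meet (S.meet x y) z)) := congrArg₂ S.meet rfl h1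
  have h233 : (S.meet y (S.meet x (S.meet y z))) = (S.meet y (S.meet (S.meet x y) z)) := h232
  have h234 : (S.join (S.meet y x) (S.meet y (S.meet x (S.meet y z)))) = (S.join (S.meet y x) (S.meet y (S.meet (S.meet x y) z))) := congrArg₂ S.join rfl h233
  have h235 : (S.join (S.meet y x) (S.join (S.meet (S.meet x y) z) (S.meet y x))) = (S.join (S.meet (S.meet x y) z) (S.meet y x)) := lh₂ (S.meet y x) (S.meet (S.meet x y) z)
  have h236 : (S.join (S.meet (S.meet x y) z) (S.meet y x)) = (S.join (S.meet (S.meet x y) z) (S.join (S.meet x y) (S.meet y x))) := congrArg₂ S.join rfl h124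
  have h237 : (S.join (S.meet (S.meet x y) z) (S.join (S.meet x y) (S.meet y x))) = (S.join (S.join (S.meet (S.meet x y) z) (S.meet x y)) (S.meet y x)) := (S.join_assoc (S.meet (S.meet x y) z) (S.meet x y) (S.meet y x)).symm
  have h238 : (S.join (S.meet (S.meet x y) z) (S.meet x y)) = (S.join (S.meet x (S.meet y z)) (S.meet x y)) := congrArg₂ S.join (h1).symm rfl
  have h239 : (S.join (S.meet x (S.meet y z)) (S.meet x y)) = (S.join (S.meet (S.meet x y) z) (S.join (S.meet x y) (S.meet (S.meet x y) z))) := congrArg₂ S.join h1 h199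
  have h240 : (S.join (S.meet (S.meet x y) z) (S.join (S.meet x y) (S.meet (S.meet x y) z))) = (S.join (S.meet x y) (S.meet (S.meet x y) z)) := lh₂ (S.meet (S.meet x y) z) (S.meet x y)
  have h241 : (S.join (S.meet (S.meet x y) z) (S.meet x y)) = (S.meet x y) := (((h238).trans h239).trans h240).trans (h198).symm
  have h242 : (S.join (S.join (S.meet (S.meet x y) z) (S.meet x y)) (S.meet y x)) = (S.join (S.meet x y) (S.meet y x)) := congrArg₂ S.join h241 rfl
  have h243 : (S.join (S.meet y x) (S.join (S.meet (S.meet x y) z) (S.meet y x))) = (S.meet y x) := (((((h235).trans h236).trans h237).trans h242).trans h115).trans h116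
  have h244 : (S.join (S.meet y x) (S.meet y (S.meet (S.meet x y) z))) = (S.meet y (S.join (S.meet y x) (S.meet (S.meet x y) z))) := (hcat y (S.meet y x) (S.meet (S.meet x y) z) ⟨h46, h55⟩ h243).symm
  have h245 : (S.meet y (S.meet x y)) = (S.meet y (S.join (S.meet y x) (S.meet (S.meet x y) z))) := ((((h32).trans h228).trans h231).trans h234).trans h244
  have h246 : (S.meet (S.join y (S.meet (S.meet x y) z)) (S.meet y (S.meet x y))) = (S.meet (S.join y (S.meet (S.meet x y) z)) (S.meet y (S.join (S.meet y x) (S.meet (S.meet x y) z)))) := congrArg₂ S.meet rfl h245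
  have h247 : (S.meet (S.join y (S.meet (S.meet x y) z)) (S.meet y (S.join (S.meet y x) (S.meet (S.meet x y) z)))) = (S.meet (S.meet (S.join y (S.meet (S.meet x y) z)) y) (S.join (S.meet y x) (S.meet (S.meet x y) z))) := (S.meet_assoc (S.join y (S.meet (S.meet x y) z)) y (S.join (S.meet y x) (S.meet (S.meet x y) z))).symm
  have h248 : (S.join y (S.meet x (S.meet y z))) = (S.join (S.join y (S.meet y x)) (S.meet (S.meet x y) z)) := congrArg₂ S.join (h46).symm h1
  have h249 : (S.join (S.join y (S.meet y x)) (S.meet (S.meet x y) z)) = (S.join y (S.join (S.meet y x) (S.meet (S.meet x y) z))) := S.join_assoc y (S.meet y x) (S.meet (S.meet x y) z)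
  have h250 : (S.meet (S.join y (S.meet (S.meet x y) z)) y) = (S.join y (S.join (S.meet y x) (S.meet (S.meet x y) z))) := (((((h224).symm).trans (h223).symm).trans (h2).symm).trans h248).trans h249
  have h251 : (S.meet (S.meet (S.join y (S.meet (S.meet x y) z)) y) (S.join (S.meet y x) (S.meet (S.meet x y) z))) = (S.meet (S.join y (S.join (S.meet y x) (S.meet (S.meet x y) z))) (S.join (S.meet y x) (S.meet (S.meet x y) z))) := congrArg₂ S.meet h250 rfl
  have h252 : (S.meet (S.join y (S.join (S.meet y x) (S.meet (S.meet x y) z))) (S.join (S.meet y x) (S.meet (S.meet x y) z))) = (S.join (S.meet y x) (S.meet (S.meet x y) z)) := S.absorb₂ (S.join (S.meet y x) (S.meet (S.meet x y) z)) y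
  have h253 : (S.meet (S.join y (S.meet (S.meet x y) z)) x) = (S.join (S.meet y x) (S.meet (S.meet x y) z)) := ((((((((h192).trans h221).trans h222).trans h226).trans h227).trans h246).trans h247).trans h251).trans h252
  have h254 : (S.meet (S.join x (S.meet y x)) (S.meet (S.join y (S.meet (S.meet x y) z)) x)) = (S.meet (S.join x (S.meet y x)) (S.join (S.meet y x) (S.meet (S.meet x y) z))) := congrArg₂ S.meet rfl h253
  have h255 : (S.join (S.join x (S.meet y x)) (S.meet y x)) = (S.join x (S.join (S.meet y x) (S.meet y x))) := S.join_assoc x (S.meet y x) (S.meet y x)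
  have h256 : (S.join (S.meet y x) (S.meet y x)) = (S.meet y x) := S.join_idem (S.meet y x)
  have h257 : (S.join (S.meet y x) (S.meet y x)) = (S.meet y x) := h256
  have h258 : (S.join x (S.join (S.meet y x) (S.meet y x))) = (S.join x (S.meet y x)) := congrArg₂ S.join rfl h257
  have h259 : (S.join (S.join x (S.meet y x)) (S.meet y x)) = (S.join x (S.meet y x)) := (h255).trans h258
  have h260 : (S.join (S.meet y x) (S.join x (S.meet y x))) = (S.join (S.join (S.meet y x) x) (S.meet y x)) := (S.join_assoc (S.meet y x) x (S.meet y x)).symm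
  have h261 : (S.join (S.meet y x) x) = x := S.absorb₄ x y
  have h262 : (S.join (S.meet y x) x) = x := h261
  have h263 : (S.join (S.join (S.meet y x) x) (S.meet y x)) = (S.join x (S.meet y x)) := congrArg₂ S.join h262 rfl
  have h264 : (S.join (S.meet y x) (S.join x (S.meet y x))) = (S.join x (S.meet y x)) := (h260).trans h263
  have h265 : (S.meet (S.join x (S.meet y x)) (S.join (S.meet y x) (S.meet (S.meet x y) z))) = (S.join (S.meet y x) (S.meet (S.join x (S.meet y x)) (S.meet (S.meet x y) z))) := hcat (S.join x (S.meet y x)) (S.meet y x) (S.meet (S.meet x y) z) ⟨h259, h264⟩ h243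
  have h266 : (S.meet (S.meet x y) z) = (S.meet (S.join (S.meet x y) (S.meet (S.meet x y) z)) (S.meet (S.meet x y) z)) := (S.absorb₂ (S.meet (S.meet x y) z) (S.meet x y)).symm
  have h267 : (S.meet (S.meet x y) z) = (S.join (S.meet (S.meet x y) z) (S.meet (S.meet x y) z)) := (S.join_idem (S.meet (S.meet x y) z)).symm
  have h268 : (S.meet (S.meet x y) z) = (S.join (S.meet (S.meet x y) z) (S.meet (S.meet x y) z)) := h267
  have h269 : (S.meet (S.join (S.meet x y) (S.meet (S.meet x y) z)) (S.meet (S.meet x y) z)) = (S.meet (S.meet x y) (S.join (S.meet (S.meet x y) z) (S.meet (S.meet x y) z))) := congrArg₂ S.meet (h199).symm h268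
  have h270 : (S.meet (S.meet x y) (S.join (S.meet (S.meet x y) z) (S.meet (S.meet x y) z))) = (S.meet (S.meet x y) (S.meet (S.meet x y) z)) := congrArg₂ S.meet rfl (h268).symm
  have h271 : (S.meet (S.meet x y) (S.meet (S.meet x y) z)) = (S.meet x (S.meet y (S.meet (S.meet x y) z))) := S.meet_assoc x y (S.meet (S.meet x y) z)
  have h272 : (S.meet y (S.meet (S.meet x y) z)) = (S.meet (S.meet y (S.meet x y)) z) := (S.meet_assoc y (S.meet x y) z).symm
  have h273 : (S.meet (S.meet y (S.meet x y)) z) = (S.meet (S.meet y x) z) := congrArg₂ S.meet h33 rfl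
  have h274 : (S.meet y (S.meet (S.meet x y) z)) = (S.meet (S.meet y x) z) := (h272).trans h273
  have h275 : (S.meet x (S.meet y (S.meet (S.meet x y) z))) = (S.meet x (S.meet (S.meet y x) z)) := congrArg₂ S.meet rfl h274
  have h276 : (S.meet (S.meet x y) z) = (S.meet x (S.meet (S.meet y x) z)) := ((((h266).trans h269).trans h270).trans h271).trans h275
  have h277 : (S.meet (S.join x (S.meet y x)) (S.meet (S.meet x y) z)) = (S.meet (S.join x (S.meet y x)) (S.meet x (S.meet (S.meet y x) z))) := congrArg₂ S.meet rfl h276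
  have h278 : (S.meet (S.join x (S.meet y x)) (S.meet x (S.meet (S.meet y x) z))) = (S.meet (S.meet (S.join x (S.meet y x)) x) (S.meet (S.meet y x) z)) := (S.meet_assoc (S.join x (S.meet y x)) x (S.meet (S.meet y x) z)).symm
  have h279 : x = (S.join x (S.meet x y)) := (S.absorb₃ x y).symm
  have h280 : (S.join x (S.meet x y)) = (S.join x (S.join (S.meet y x) (S.meet x y))) := congrArg₂ S.join rfl h35
  have h281 : (S.join x (S.join (S.meet y x) (S.meet x y))) = (S.join (S.join x (S.meet y x)) (S.meet x y)) := (S.join_assoc x (S.meet y x) (S.meet x y)).symm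
  have h282 : x = (S.join (S.join x (S.meet y x)) (S.meet x y)) := ((h279).trans h280).trans h281
  have h283 : (S.meet (S.join x (S.meet y x)) x) = (S.meet (S.join x (S.meet y x)) (S.join (S.join x (S.meet y x)) (S.meet x y))) := congrArg₂ S.meet rfl h282
  have h284 : (S.meet (S.join x (S.meet y x)) (S.join (S.join x (S.meet y x)) (S.meet x y))) = (S.join x (S.meet y x)) := S.absorb₁ (S.join x (S.meet y x)) (S.meet x y)
  have h285 : (S.meet (S.join x (S.meet y x)) x) = (S.join x (S.meet y x)) := (h283).trans h284
  have h286 : (S.meet (S.meet (S.join x (S.meet y x)) x) (S.meet (S.meet y x) z)) = (S.meet (S.join x (S.meet y x)) (S.meet (S.meet y x) z)) := congrArg₂ S.meet h285 rfl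
  have h287 : (S.meet y (S.meet x (S.meet y z))) = (S.meet (S.meet y x) z) := ((h232).trans h272).trans h273
  have h288 : (S.join (S.meet y x) (S.meet y (S.meet x (S.meet y z)))) = (S.join (S.meet y x) (S.meet (S.meet y x) z)) := congrArg₂ S.join rfl h287
  have h289 : (S.meet y x) = (S.join (S.meet y x) (S.meet (S.meet y x) z)) := ((h228).trans h231).trans h288
  have h290 : (S.join x (S.meet y x)) = (S.join x (S.join (S.meet y x) (S.meet (S.meet y x) z))) := congrArg₂ S.join rfl h289
  have h291 : (S.join x (S.join (S.meet y x) (S.meet (S.meet y x) z))) = (S.join (S.join x (S.meet y x)) (S.meet (S.meet y x) z)) := (S.join_assoc x (S.meet y x) (S.meet (S.meet y x) z)).symm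
  have h292 : (S.join x (S.meet y x)) = (S.join (S.join x (S.meet y x)) (S.meet (S.meet y x) z)) := (h290).trans h291
  have h293 : (S.meet (S.join x (S.meet y x)) (S.meet (S.meet y x) z)) = (S.meet (S.join (S.join x (S.meet y x)) (S.meet (S.meet y x) z)) (S.meet (S.meet y x) z)) := congrArg₂ S.meet h292 rfl
  have h294 : (S.meet (S.join (S.join x (S.meet y x)) (S.meet (S.meet y x) z)) (S.meet (S.meet y x) z)) = (S.meet (S.meet y x) z) := S.absorb₂ (S.meet (S.meet y x) z) (S.join x (S.meet y x))
  have h295 : (S.meet (S.join x (S.meet y x)) (S.meet (S.meet x y) z)) = (S.meet y (S.meet x (S.meet y z))) := (((((((h277).trans h278).trans h286).trans h293).trans h294).trans (h273).symm).trans (h272).symm).trans (h232).symm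
  have h296 : (S.join (S.meet y x) (S.meet (S.join x (S.meet y x)) (S.meet (S.meet x y) z))) = (S.join (S.meet y x) (S.meet y (S.meet x (S.meet y z)))) := congrArg₂ S.join rfl h295
  have h297 : (S.meet (S.join x (S.meet y x)) (S.meet (S.join y (S.meet (S.meet x y) z)) x)) = (S.meet y x) := ((((h254).trans h265).trans h296).trans (h231).symm).trans (h228).symm
  have h298 : (S.meet x (S.meet (S.join x (S.meet y x)) (S.meet (S.join y (S.meet (S.meet x y) z)) x))) = (S.meet x (S.meet y x)) := congrArg₂ S.meet rfl h297
  have h299 : (S.meet x (S.meet y x)) = (S.meet x y) := lh₁ x y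
  have h300 : (S.meet x (S.join y (S.meet x (S.meet y z)))) = (S.meet x y) := (((((h4).trans h5).trans h190).trans h191).trans h298).trans h299
  exact h300
end

section
/- In a left-handed skew lattice, the identity x ∧ (y ∨ (x ∧ y ∧ z)) = x ∧ y implies the identity x ∧ (y ∨ (x ∧ z)) = x ∧ (y ∨ (z ∧ x)). -/
theorem skew_lh_short_implies_symm {α : Type*} (S : SkewLattice α)
    (lh₁ : ∀ x y, S.meet x (S.meet y x) = S.meet x y)
    (lh₂ : ∀ x y, S.join x (S.join y x) = S.join y x)
    (hshort : ∀ x y z, S.meet x (S.join y (S.meet x (S.meet y z))) = S.meet x y) :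
    ∀ x y z, S.meet x (S.join y (S.meet x z)) = S.meet x (S.join y (S.meet z x)) := by
  intro x y z
  set u := S.meet x z with hu
  set v := S.meet z x with hv
  -- x ∧ v = u
  have hxv : S.meet x v = u := lh₁ x z
  -- v ∧ u = v
  have hvu : S.meet v u = v := by
    rw [hv, hu, S.meet_assoc, ← S.meet_assoc x x z, S.meet_idem, lh₁]
  -- v ∨ u = u
  have hvju : S.join v u = u := by
    conv_lhs => rw [← hvu]
    exact S.absorb₄ u v
  -- (y ∨ v) ∧ v = v
  have habs : S.meet (S.join y v) v = v := S.absorb₂ v y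
  have h := hshort x (S.join y v) v
  rw [habs, hxv, S.join_assoc, hvju] at h
  exact h
end

section
/- In a left-handed skew lattice, the identity x ∧ (y ∨ (x ∧ z)) = x ∧ (y ∨ (z ∧ x)) implies the categorical implication: x ≥ y and y ⪰ z imply x ∧ (y ∨ z) = y ∨ (x ∧ z). -/
theorem skew_lh_symm_implies_cat {α : Type*} (S : SkewLattice α)
    (lh₁ : ∀ x y, S.meet x (S.meet y x) = S.meet x y)
    (lh₂ : ∀ x y, S.join x (S.join y x) = S.join y x)
    (hsymm : ∀ x y z, S.meet x (S.join y (S.meet x z)) = S.meet x (S.join y (S.meet z x))) :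
    ∀ x y z, S.geq x y → S.succeq y z →
      S.meet x (S.join y z) = S.join y (S.meet x z) := by
  intro x y z hxy hyz
  obtain ⟨hxy1, hxy2⟩ := hxy
  -- z ∨ y = y
  have hzy : S.join z y = y := by
    have := lh₂ y z
    rw [SkewLattice.succeq] at hyz
    rw [this] at hyz; exact hyz
  -- z ∨ x = x
  have hzx : S.join z x = x := by
    calc S.join z x = S.join z (S.join y x) := by rw [hxy2]
    _ = S.join (S.join z y) x := (S.join_assoc z y x).symm
    _ = x := by rw [hzy, hxy2]
  -- z ∧ x = z
  have hmzx : S.meet z x = z := by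
    have := S.absorb₁ z x
    rwa [hzx] at this
  -- x ∨ (y ∨ (x ∧ z)) = x
  have hx : S.join x (S.join y (S.meet x z)) = x := by
    calc S.join x (S.join y (S.meet x z))
        = S.join (S.join x y) (S.meet x z) := (S.join_assoc x y _).symm
      _ = S.join x (S.meet x z) := by rw [hxy1]
      _ = x := S.absorb₃ x z
  -- x ∧ (y ∨ (x ∧ z)) = y ∨ (x ∧ z)
  have hkey : S.meet x (S.join y (S.meet x z)) = S.join y (S.meet x z) := by
    have := S.absorb₂ (S.join y (S.meet x z)) x
    rwa [hx] at this
  calc S.meet x (S.join y z)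
      = S.meet x (S.join y (S.meet z x)) := by rw [hmzx]
    _ = S.meet x (S.join y (S.meet x z)) := (hsymm x y z).symm
    _ = S.join y (S.meet x z) := hkey
end

section
/- Every distributive skew lattice is categorical: the identity x ∧ (y ∨ z) ∧ x = (x ∧ y ∧ x) ∨ (x ∧ z ∧ x) implies the implication x ≥ y ⪰ z ⟹ x ∧ (z ∨ y ∨ z) ∧ x = (x ∧ z ∧ x) ∨ y ∨ (x ∧ z ∧ x). -/
theorem skew_distributive_implies_categorical {α : Type*} (S : SkewLattice α)
    (hdist : ∀ x y z, S.meet x (S.meet (S.join y z) x) =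
      S.join (S.meet x (S.meet y x)) (S.meet x (S.meet z x))) :
    ∀ x y z, S.geq x y → S.succeq y z →
      S.meet x (S.meet (S.join z (S.join y z)) x) =
        S.join (S.meet x (S.meet z x)) (S.join y (S.meet x (S.meet z x))) := by
  intro x y z hxy _
  obtain ⟨h1, h2⟩ := hxy
  have hxy_meet : S.meet x y = y := by
    conv_lhs => rw [← h1]
    exact S.absorb₂ y x
  have hmid : S.meet x (S.meet y x) = y := by
    rw [show S.meet y x = y from by conv_lhs => rw [← h2]; exact S.absorb₁ y x]
    exact hxy_meet
  rw [hdist x z (S.join y z), hdist x y z, hmid]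
end

section
/- In a skew lattice satisfying the strictly categorical condition (x ≥ y ≥ z, x ≥ y' ≥ z, y D y' imply y = y'), for any a > b the interval [b, a] = {x : a ≥ x ≥ b} is closed under ∧ and ∨ and both operations are commutative on it, i.e., [b, a] is a sublattice. -/
namespace SkewLattice

variable {α : Type*} (S : SkewLattice α)

/-- From x ≥ y (join form), derive the meet forms. -/
lemma meet_of_geq₁ {x y : α} (h : S.geq x y) : S.meet x y = y := by
  rw [← h.1]; exact S.absorb₂ y x

lemma meet_of_geq₂ {x y : α} (h : S.geq x y) : S.meet y x = y := by
  rw [← h.2]; exact S.absorb₁ y x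

/-- From the meet forms, derive x ≥ y. -/
lemma geq_of_meet {x y : α} (h1 : S.meet x y = y) (h2 : S.meet y x = y) :
    S.geq x y := by
  constructor
  · rw [← h1]; exact S.absorb₃ x y
  · rw [← h2]; exact S.absorb₄ x y

/-- Membership of a meet of interval elements in the interval. -/
lemma meet_mem {a b u v : α} (hau : S.geq a u) (hub : S.geq u b)
    (hav : S.geq a v) (hvb : S.geq v b) :
    S.geq a (S.meet u v) ∧ S.geq (S.meet u v) b := by
  constructor
  · apply S.geq_of_meet
    · rw [← S.meet_assoc, S.meet_of_geq₁ hau]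
    · rw [S.meet_assoc, S.meet_of_geq₂ hav]
  · apply S.geq_of_meet
    · rw [S.meet_assoc, S.meet_of_geq₁ hvb]; exact S.meet_of_geq₁ hub
    · rw [← S.meet_assoc, S.meet_of_geq₂ hub]; exact S.meet_of_geq₂ hvb

/-- Membership of a join of interval elements in the interval. -/
lemma join_mem {a b u v : α} (hau : S.geq a u) (hub : S.geq u b)
    (hav : S.geq a v) (hvb : S.geq v b) :
    S.geq a (S.join u v) ∧ S.geq (S.join u v) b := by
  constructor
  · constructor
    · rw [← S.join_assoc, hau.1, hav.1]
    · rw [S.join_assoc, hav.2, hau.2]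
  · constructor
    · rw [S.join_assoc, hvb.1]
    · rw [← S.join_assoc, hub.2]

/-- u ∧ v and v ∧ u are always D-related. -/
lemma dd_meet (u v : α) : S.dd (S.meet u v) (S.meet v u) := by
  have key : ∀ p q : α,
      S.meet (S.meet p q) (S.meet (S.meet q p) (S.meet p q)) = S.meet p q := by
    intro p q
    calc S.meet (S.meet p q) (S.meet (S.meet q p) (S.meet p q))
        = S.meet p (S.meet (S.meet q q) (S.meet (S.meet p p) q)) := by
          simp only [S.meet_assoc]
      _ = S.meet (S.meet p q) (S.meet p q) := by
          rw [S.meet_idem, S.meet_idem]; simp only [S.meet_assoc]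
      _ = S.meet p q := S.meet_idem _
  exact ⟨key u v, key v u⟩

end SkewLattice

theorem skew_strictly_categorical_interval {α : Type*} (S : SkewLattice α)
    (hsc : ∀ x y y' z, S.geq x y → S.geq y z → S.geq x y' → S.geq y' z →
      S.dd y y' → y = y')
    (a b : α) (hab : S.gt a b) :
    ∀ x y, S.geq a x → S.geq x b → S.geq a y → S.geq y b →
      (S.geq a (S.meet x y) ∧ S.geq (S.meet x y) b) ∧
      (S.geq a (S.join x y) ∧ S.geq (S.join x y) b) ∧
      S.meet x y = S.meet y x ∧ S.join x y = S.join y x := by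
  -- meets commute on the interval
  have mcomm : ∀ u v, S.geq a u → S.geq u b → S.geq a v → S.geq v b →
      S.meet u v = S.meet v u := by
    intro u v hau hub hav hvb
    have h1 := S.meet_mem hau hub hav hvb
    have h2 := S.meet_mem hav hvb hau hub
    exact hsc a (S.meet u v) (S.meet v u) b h1.1 h1.2 h2.1 h2.2 (S.dd_meet u v)
  intro x y hax hxb hay hyb
  have hjxy := S.join_mem hax hxb hay hyb
  have hjyx := S.join_mem hay hyb hax hxb
  refine ⟨S.meet_mem hax hxb hay hyb, hjxy, mcomm x y hax hxb hay hyb, ?_⟩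
  -- join commutativity: set p = x ∨ y, q = y ∨ x and show p = q
  set p := S.join x y with hp
  set q := S.join y x with hq
  -- q ≥ x and q ≥ y
  have hqx : S.geq q x := by
    have h1 : S.meet q x = x := S.absorb₂ x y
    have h2 : S.meet x q = x := by
      rw [mcomm x q hax hxb hjyx.1 hjyx.2]; exact h1
    exact S.geq_of_meet h1 h2
  have hqy : S.geq q y := by
    have h2 : S.meet y q = y := S.absorb₁ y x
    have h1 : S.meet q y = y := by
      rw [mcomm q y hjyx.1 hjyx.2 hay hyb]; exact h2
    exact S.geq_of_meet h1 h2
  -- p ≥ x and p ≥ y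
  have hpx : S.geq p x := by
    have h2 : S.meet x p = x := S.absorb₁ x y
    have h1 : S.meet p x = x := by
      rw [mcomm p x hjxy.1 hjxy.2 hax hxb]; exact h2
    exact S.geq_of_meet h1 h2
  have hpy : S.geq p y := by
    have h1 : S.meet p y = y := S.absorb₂ y x
    have h2 : S.meet y p = y := by
      rw [mcomm y p hay hyb hjxy.1 hjxy.2]; exact h1
    exact S.geq_of_meet h1 h2
  -- p ∨ q equals both q and p
  have e1 : S.join p q = q := by
    rw [hp, S.join_assoc, hqy.2, hqx.2]
  have e2 : S.join p q = p := by
    rw [hq, ← S.join_assoc, hpy.1, hpx.1]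
  rw [← e2, e1]
end
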